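/- arXiv:2112.06625 — 11 statements merged into one kernel-verified Lean document; each statement's English description precedes it below -/
import Mathlib

section
/- Bias bound for the multiple-importance-sampling estimator (tighter general form, 0 < ω < 1): under the smoothly-changing assumptions, the absolute difference between J = Σ_{s=T+1}^{T+β} γ^{s-T-1} ∫_Θ ν_s(θ) f(θ,s) dμ(θ) and Ĵ = Σ_{s=T+1}^{T+β} γ^{s-T-1} ∫_Θ ν_s(θ) · [ Σ_{t=T-α+1}^{T} ω^{T-t} ν_t(θ) f(θ,t) ] / [ Σ_{k=T-α+1}^{T} ω^{T-k} ν_k(θ) ] dμ(θ) satisfies |J − Ĵ| ≤ (L_M + 2 R_max L_ν) · ((1−γ^β)/(1−γ)) · ( ω (1 − α ω^{α−1} + (α−1) ω^{α}) / ((1−ω)(1−ω^{α})) + 1/(1−γ) ). -/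
/-!
For a single target time `u`, the weighted estimate is exact when the target density is replaced
by the mixture `∑ p j ν (τ j) / ∑ p j`, so its error splits into the errors of the individual
sources, each at most `(LM + Rmax Lν) |u - τ j|` by smoothness, plus the mismatch between the
mixture and `ν u`, at most `Rmax Lν |u - τ j|` per source. With geometric weights `ω ^ j` and
`|u - τ j| = i + 1 + j` the mean distance is `i + 1` plus the mean of a truncated geometric law,
and summing the discounted errors over `i < β` gives the bound.
-/

open MeasureTheory Finset

lemma one_sub_sq_mul_sum_range_mul_pow {R : Type*} [CommRing R] (x : R) (n : ℕ) :
    (1 - x) ^ 2 * ∑ j ∈ range n, (j : R) * x ^ j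
      = x * (1 - n * x ^ (n - 1) + (n - 1) * x ^ n) := by
  induction n with
  | zero => simp
  | succ n ih =>
    rw [sum_range_succ, mul_add, ih]
    cases n with
    | zero => norm_num
    | succ n => push_cast; ring

lemma sum_range_pow_mul_add_div_geom_sum {K : Type*} [Field K] {x : K} (hx : x ≠ 1) {n : ℕ}
    (hsum : ∑ j ∈ range n, x ^ j ≠ 0) (c : K) :
    (∑ j ∈ range n, x ^ j * (c + j)) / ∑ j ∈ range n, x ^ j
      = c + x * (1 - n * x ^ (n - 1) + (n - 1) * x ^ n) / ((1 - x) * (1 - x ^ n)) := by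
  have h1x : 1 - x ≠ 0 := sub_ne_zero.mpr hx.symm
  have hgeom : (1 - x) * ∑ j ∈ range n, x ^ j = 1 - x ^ n := by
    rw [mul_comm, geom_sum_mul_neg]
  have hxn : 1 - x ^ n ≠ 0 := hgeom ▸ mul_ne_zero h1x hsum
  have hj := one_sub_sq_mul_sum_range_mul_pow x n
  simp_rw [mul_add, sum_add_distrib, ← sum_mul, mul_comm (x ^ _) (_ : K)]
  rw [← hgeom]
  field_simp
  linear_combination hj

lemma sum_range_succ_mul_pow_le {γ : ℝ} (hγ0 : 0 ≤ γ) (hγ1 : γ < 1) (n : ℕ) :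
    ∑ i ∈ range n, ((i : ℝ) + 1) * γ ^ i ≤ (1 - γ ^ n) / (1 - γ) ^ 2 := by
  have h : (1 - γ) ^ 2 * ∑ i ∈ range n, ((i : ℝ) + 1) * γ ^ i
      = 1 - γ ^ n - (1 - γ) * n * γ ^ n := by
    induction n with
    | zero => simp
    | succ n ih => rw [sum_range_succ, mul_add, ih]; push_cast; ring
  rw [le_div_iff₀ (by nlinarith), mul_comm, h]
  have : 0 ≤ (1 - γ) * n * γ ^ n := by have := sub_pos.mpr hγ1; positivity
  linarith

lemma abs_sum_range_pow_mul_le {γ D A : ℝ} (hγ0 : 0 ≤ γ) (hγ1 : γ < 1) (hD : 0 ≤ D)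
    (a : ℕ → ℝ) (ha : ∀ i, |a i| ≤ D * ((i + 1) + A)) (n : ℕ) :
    |∑ i ∈ range n, γ ^ i * a i| ≤ D * ((1 - γ ^ n) / (1 - γ)) * (A + 1 / (1 - γ)) := by
  have h1γ : 0 < 1 - γ := sub_pos.mpr hγ1
  have hgeom : ∑ i ∈ range n, γ ^ i = (1 - γ ^ n) / (1 - γ) := by
    rw [eq_div_iff h1γ.ne', geom_sum_mul_neg]
  calc |∑ i ∈ range n, γ ^ i * a i| ≤ ∑ i ∈ range n, γ ^ i * (D * ((i + 1) + A)) := by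
        refine (abs_sum_le_sum_abs _ _).trans (sum_le_sum fun i _ => ?_)
        rw [abs_mul, abs_of_nonneg (pow_nonneg hγ0 i)]
        exact mul_le_mul_of_nonneg_left (ha i) (pow_nonneg hγ0 i)
    _ = D * (∑ i ∈ range n, ((i : ℝ) + 1) * γ ^ i + A * ∑ i ∈ range n, γ ^ i) := by
        rw [mul_sum _ _ A, ← sum_add_distrib, mul_sum]
        exact sum_congr rfl fun i _ => by ring
    _ ≤ D * ((1 - γ ^ n) / (1 - γ) ^ 2 + A * ∑ i ∈ range n, γ ^ i) := by
        gcongr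
        exact sum_range_succ_mul_pow_le hγ0 hγ1 n
    _ = D * ((1 - γ ^ n) / (1 - γ)) * (A + 1 / (1 - γ)) := by
        rw [hgeom]; field_simp; ring

section MixtureEstimate

variable {ι Θ : Type*}

/-- The self-normalised multiple-importance-sampling estimate with balance-heuristic weights
`p j * q j θ`; the weights `p` need not be normalised. -/
noncomputable def mixtureEstimate (s : Finset ι) (p : ι → ℝ) (q g : ι → Θ → ℝ) (θ : Θ) : ℝ :=
  (∑ j ∈ s, p j * q j θ * g j θ) / ∑ j ∈ s, p j * q j θ

variable {s : Finset ι} {p : ι → ℝ} {q g : ι → Θ → ℝ} {R : ℝ}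

lemma abs_mixtureEstimate_le (hs : s.Nonempty) (hp : ∀ j ∈ s, 0 ≤ p j)
    (hq : ∀ j ∈ s, ∀ θ, 0 ≤ q j θ) (hg : ∀ j ∈ s, ∀ θ, |g j θ| ≤ R) (θ : Θ) :
    |mixtureEstimate s p q g θ| ≤ R := by
  obtain ⟨j₀, hj₀⟩ := hs
  have hw : ∀ j ∈ s, 0 ≤ p j * q j θ := fun j hj => mul_nonneg (hp j hj) (hq j hj θ)
  rcases (sum_nonneg hw).eq_or_lt with hm | hm
  · rw [mixtureEstimate, ← hm, div_zero, abs_zero]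
    exact (abs_nonneg _).trans (hg j₀ hj₀ θ)
  · rw [mixtureEstimate, abs_div, abs_of_pos hm, div_le_iff₀ hm, mul_sum]
    refine (abs_sum_le_sum_abs _ _).trans (sum_le_sum fun j hj => ?_)
    rw [abs_mul, abs_of_nonneg (hw j hj), mul_comm R]
    exact mul_le_mul_of_nonneg_left (hg j hj θ) (hw j hj)

lemma sum_mul_mixtureEstimate (hp : ∀ j ∈ s, 0 ≤ p j) (hq : ∀ j ∈ s, ∀ θ, 0 ≤ q j θ) (θ : Θ) :
    (∑ j ∈ s, p j * q j θ) * mixtureEstimate s p q g θ = ∑ j ∈ s, p j * q j θ * g j θ := by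
  by_cases hm : ∑ j ∈ s, p j * q j θ = 0
  · have hw := (sum_eq_zero_iff_of_nonneg fun j hj => mul_nonneg (hp j hj) (hq j hj θ)).mp hm
    rw [hm, zero_mul, sum_eq_zero fun j hj => by rw [hw j hj, zero_mul]]
  · exact mul_div_cancel₀ _ hm

variable [MeasurableSpace Θ] {μ : Measure Θ}

lemma aemeasurable_mixtureEstimate (hq : ∀ j ∈ s, AEMeasurable (q j) μ)
    (hg : ∀ j ∈ s, AEMeasurable (g j) μ) : AEMeasurable (mixtureEstimate s p q g) μ :=
  (s.aemeasurable_fun_sum fun j hj => ((hq j hj).const_mul _).mul (hg j hj)).div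
    (s.aemeasurable_fun_sum fun j hj => (hq j hj).const_mul _)

lemma abs_integral_mul_le_of_abs_le {h φ : Θ → ℝ} (hh : Integrable h μ)
    (hφ : ∀ θ, |φ θ| ≤ R) : |∫ θ, h θ * φ θ ∂μ| ≤ R * ∫ θ, |h θ| ∂μ := by
  rw [← integral_const_mul, ← Real.norm_eq_abs]
  refine norm_integral_le_of_norm_le (hh.abs.const_mul R) (ae_of_all _ fun θ => ?_)
  rw [Real.norm_eq_abs, abs_mul, mul_comm]
  exact mul_le_mul_of_nonneg_right (hφ θ) (abs_nonneg _)

lemma abs_integral_mul_sub_integral_mul_le {q q' g g' : Θ → ℝ} {ε : ℝ}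
    (hq : Integrable q μ) (hq' : Integrable q' μ)
    (hgm : AEStronglyMeasurable g μ) (hg'm : AEStronglyMeasurable g' μ)
    (hgg' : ∀ θ, |g θ - g' θ| ≤ ε) (hg' : ∀ θ, |g' θ| ≤ R) :
    |∫ θ, q θ * g θ ∂μ - ∫ θ, q' θ * g' θ ∂μ|
      ≤ ε * ∫ θ, |q θ| ∂μ + R * ∫ θ, |q θ - q' θ| ∂μ := by
  have hg : ∀ θ, |g θ| ≤ ε + R := fun θ => by
    linarith [abs_sub_abs_le_abs_sub (g θ) (g' θ), hgg' θ, hg' θ]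
  have hsplit : ∫ θ, q θ * g θ ∂μ - ∫ θ, q' θ * g' θ ∂μ
      = ∫ θ, q θ * (g θ - g' θ) ∂μ + ∫ θ, (q θ - q' θ) * g' θ ∂μ := by
    simp_rw [mul_sub, sub_mul]
    rw [integral_sub (hq.mul_bdd hgm (ae_of_all _ hg)) (hq.mul_bdd hg'm (ae_of_all _ hg')),
      integral_sub (hq.mul_bdd hg'm (ae_of_all _ hg')) (hq'.mul_bdd hg'm (ae_of_all _ hg'))]
    ring
  rw [hsplit]
  exact (abs_add_le _ _).trans (add_le_add (abs_integral_mul_le_of_abs_le hq hgg')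
    (abs_integral_mul_le_of_abs_le (hq.sub hq') hg'))

lemma sum_mul_integral_mul_mixtureEstimate (hs : s.Nonempty) (hp : ∀ j ∈ s, 0 ≤ p j)
    (hq : ∀ j ∈ s, ∀ θ, 0 ≤ q j θ) (hqi : ∀ j ∈ s, Integrable (q j) μ)
    (hgm : ∀ j ∈ s, AEMeasurable (g j) μ) (hg : ∀ j ∈ s, ∀ θ, |g j θ| ≤ R) :
    ∑ j ∈ s, p j * ∫ θ, q j θ * mixtureEstimate s p q g θ ∂μ
      = ∑ j ∈ s, p j * ∫ θ, q j θ * g j θ ∂μ := by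
  have hΦm : AEStronglyMeasurable (mixtureEstimate s p q g) μ :=
    (aemeasurable_mixtureEstimate (fun j hj => (hqi j hj).aemeasurable) hgm).aestronglyMeasurable
  have hΦ := abs_mixtureEstimate_le hs hp hq hg
  calc ∑ j ∈ s, p j * ∫ θ, q j θ * mixtureEstimate s p q g θ ∂μ
      = ∫ θ, (∑ j ∈ s, p j * q j θ) * mixtureEstimate s p q g θ ∂μ := by
        simp_rw [sum_mul, mul_assoc, ← integral_const_mul]
        exact (integral_finsetSum s fun j hj =>
          ((hqi j hj).mul_bdd hΦm (ae_of_all _ hΦ)).const_mul _).symm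
    _ = ∑ j ∈ s, p j * ∫ θ, q j θ * g j θ ∂μ := by
        simp_rw [sum_mul_mixtureEstimate hp hq, mul_assoc, ← integral_const_mul]
        exact integral_finsetSum s fun j hj =>
          ((hqi j hj).mul_bdd (hgm j hj).aestronglyMeasurable (ae_of_all _ (hg j hj))).const_mul _

theorem abs_sub_integral_mul_mixtureEstimate_le (X : ℝ) {q₀ : Θ → ℝ} (hq₀ : Integrable q₀ μ)
    (hp : ∀ j ∈ s, 0 ≤ p j) (hP : 0 < ∑ j ∈ s, p j)
    (hq : ∀ j ∈ s, ∀ θ, 0 ≤ q j θ) (hqi : ∀ j ∈ s, Integrable (q j) μ)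
    (hgm : ∀ j ∈ s, AEMeasurable (g j) μ) (hg : ∀ j ∈ s, ∀ θ, |g j θ| ≤ R) :
    |X - ∫ θ, q₀ θ * mixtureEstimate s p q g θ ∂μ|
      ≤ (∑ j ∈ s, p j * (|X - ∫ θ, q j θ * g j θ ∂μ| + R * ∫ θ, |q j θ - q₀ θ| ∂μ))
        / ∑ j ∈ s, p j := by
  have hs := nonempty_of_sum_ne_zero hP.ne'
  have hΦm : AEStronglyMeasurable (mixtureEstimate s p q g) μ :=
    (aemeasurable_mixtureEstimate (fun j hj => (hqi j hj).aemeasurable) hgm).aestronglyMeasurable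
  have hΦ := abs_mixtureEstimate_le hs hp hq hg
  have hsub : ∀ j ∈ s, p j * ∫ θ, (q j θ - q₀ θ) * mixtureEstimate s p q g θ ∂μ
      = p j * ∫ θ, q j θ * mixtureEstimate s p q g θ ∂μ
        - p j * ∫ θ, q₀ θ * mixtureEstimate s p q g θ ∂μ := fun j hj => by
    simp_rw [sub_mul]
    rw [integral_sub ((hqi j hj).mul_bdd hΦm (ae_of_all _ hΦ))
      (hq₀.mul_bdd hΦm (ae_of_all _ hΦ)), mul_sub]
  have hdecomp : (∑ j ∈ s, p j) * (X - ∫ θ, q₀ θ * mixtureEstimate s p q g θ ∂μ)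
      = ∑ j ∈ s, p j * ((X - ∫ θ, q j θ * g j θ ∂μ)
          + ∫ θ, (q j θ - q₀ θ) * mixtureEstimate s p q g θ ∂μ) := by
    simp only [mul_add, sum_add_distrib]
    rw [sum_congr rfl hsub, sum_sub_distrib,
      sum_mul_integral_mul_mixtureEstimate hs hp hq hqi hgm hg]
    simp only [mul_sub, sum_sub_distrib, ← sum_mul]
    ring
  rw [le_div_iff₀ hP]
  calc |X - ∫ θ, q₀ θ * mixtureEstimate s p q g θ ∂μ| * ∑ j ∈ s, p j
      = |(∑ j ∈ s, p j) * (X - ∫ θ, q₀ θ * mixtureEstimate s p q g θ ∂μ)| := by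
        rw [abs_mul, abs_of_pos hP, mul_comm]
    _ ≤ ∑ j ∈ s, p j * (|X - ∫ θ, q j θ * g j θ ∂μ| + R * ∫ θ, |q j θ - q₀ θ| ∂μ) := by
        rw [hdecomp]
        refine (abs_sum_le_sum_abs _ _).trans (sum_le_sum fun j hj => ?_)
        rw [abs_mul, abs_of_nonneg (hp j hj)]
        exact mul_le_mul_of_nonneg_left ((abs_add_le _ _).trans
          (add_le_add_right (abs_integral_mul_le_of_abs_le ((hqi j hj).sub hq₀) hΦ) _)) (hp j hj)

theorem abs_integral_mul_sub_integral_mul_mixtureEstimate_le_of_lipschitz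
    {ν : ℤ → Θ → ℝ} (hν : ∀ t θ, 0 ≤ ν t θ) (hνint : ∀ t, ∫ θ, ν t θ ∂μ = 1)
    {f : Θ → ℤ → ℝ} (hfm : ∀ t, AEMeasurable (f · t) μ) (hR : 0 ≤ R)
    (hf : ∀ θ t, |f θ t| ≤ R) {LM Lν : ℝ}
    (hEnv : ∀ θ t t', |f θ t - f θ t'| ≤ LM * |(t : ℝ) - (t' : ℝ)|)
    (hPol : ∀ t t', ∫ θ, |ν t θ - ν t' θ| ∂μ ≤ Lν * |(t : ℝ) - (t' : ℝ)|)
    (hp : ∀ j ∈ s, 0 ≤ p j) (hP : 0 < ∑ j ∈ s, p j) (τ : ι → ℤ) (u : ℤ) :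
    |∫ θ, ν u θ * f θ u ∂μ
        - ∫ θ, ν u θ * mixtureEstimate s p (fun j => ν (τ j)) (fun j θ => f θ (τ j)) θ ∂μ|
      ≤ (LM + 2 * R * Lν) * (∑ j ∈ s, p j * |(u : ℝ) - τ j|) / ∑ j ∈ s, p j := by
  have hνi : ∀ t, Integrable (ν t) μ := fun t => integrable_of_integral_eq_one (hνint t)
  have hνu : ∫ θ, |ν u θ| ∂μ = 1 := by simp_rw [abs_of_nonneg (hν u _), hνint u]
  refine (abs_sub_integral_mul_mixtureEstimate_le _ (hνi u) hp hP (fun j _ => hν (τ j))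
    (fun j _ => hνi (τ j)) (fun j _ => hfm (τ j)) (fun j _ θ => hf θ (τ j))).trans ?_
  rw [mul_sum]
  refine div_le_div_of_nonneg_right (sum_le_sum fun j hj => ?_) hP.le
  have hsrc := abs_integral_mul_sub_integral_mul_le (hνi u) (hνi (τ j))
    (hfm u).aestronglyMeasurable (hfm (τ j)).aestronglyMeasurable
    (fun θ => hEnv θ u (τ j)) (fun θ => hf θ (τ j))
  have hu := mul_le_mul_of_nonneg_left (hPol u (τ j)) hR
  have hτ := mul_le_mul_of_nonneg_left (hPol (τ j) u) hR
  rw [hνu, mul_one] at hsrc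
  rw [abs_sub_comm] at hτ
  calc p j * (|_ - _| + R * _) ≤ p j * ((LM + 2 * R * Lν) * |(u : ℝ) - τ j|) :=
        mul_le_mul_of_nonneg_left (by linarith) (hp j hj)
    _ = _ := by ring

end MixtureEstimate

theorem bias_bound_general_general
    {Θ : Type*} [MeasurableSpace Θ] (μ : Measure Θ)
    (T : ℤ) (α β : ℕ) (hα : 0 < α)
    (ν : ℤ → Θ → ℝ)
    (hνpos : ∀ t θ, 0 < ν t θ)
    (hνint : ∀ t, ∫ θ, ν t θ ∂μ = 1)
    (f : Θ → ℤ → ℝ)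
    (hfmeas : Measurable (Function.uncurry f))
    (Rmax : ℝ) (hfbound : ∀ θ t, |f θ t| ≤ Rmax)
    (LM : ℝ) (hLM : 0 ≤ LM)
    (hEnv : ∀ θ t t', |f θ t - f θ t'| ≤ LM * |(t : ℝ) - (t' : ℝ)|)
    (Lν : ℝ) (hLν : 0 ≤ Lν)
    (hPol : ∀ t t', ∫ θ, |ν t θ - ν t' θ| ∂μ ≤ Lν * |(t : ℝ) - (t' : ℝ)|)
    (γ ω : ℝ) (hγ : γ ∈ Set.Ico (0 : ℝ) 1) (hω : ω ∈ Set.Ioo (0 : ℝ) 1) :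
    |(∑ i ∈ Finset.range β, γ ^ i * ∫ θ, ν (T + 1 + i) θ * f θ (T + 1 + i) ∂μ)
      - ∑ i ∈ Finset.range β, γ ^ i * ∫ θ, ν (T + 1 + i) θ *
          ((∑ j ∈ Finset.range α, ω ^ j * ν (T - j) θ * f θ (T - j)) /
            ∑ k ∈ Finset.range α, ω ^ k * ν (T - k) θ) ∂μ|
      ≤ (LM + 2 * Rmax * Lν) * ((1 - γ ^ β) / (1 - γ))
          * (ω * (1 - (α : ℝ) * ω ^ (α - 1) + ((α : ℝ) - 1) * ω ^ α)
              / ((1 - ω) * (1 - ω ^ α)) + 1 / (1 - γ)) := by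
  obtain ⟨hγ0, hγ1⟩ := hγ
  obtain ⟨hω0, hω1⟩ := hω
  have hR : 0 ≤ Rmax := by
    obtain ⟨θ⟩ : Nonempty Θ := by
      by_contra h
      have := not_nonempty_iff.mp h
      exact zero_ne_one ((integral_of_isEmpty (μ := μ) (f := ν 0)).symm.trans (hνint 0))
    exact (abs_nonneg _).trans (hfbound θ 0)
  have hP : 0 < ∑ j ∈ range α, ω ^ j :=
    sum_pos (fun j _ => pow_pos hω0 j) (nonempty_range_iff.mpr hα.ne')
  have hdist : ∀ i j : ℕ, |((T + 1 + i : ℤ) : ℝ) - ((T - j : ℤ) : ℝ)| = (i + 1) + j := by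
    intro i j
    rw [show ((T + 1 + i : ℤ) : ℝ) - ((T - j : ℤ) : ℝ) = i + 1 + j by push_cast; ring]
    exact abs_of_nonneg (by positivity)
  rw [← sum_sub_distrib]
  simp_rw [← mul_sub]
  refine abs_sum_range_pow_mul_le hγ0 hγ1 (by positivity) _ (fun i => ?_) β
  calc _ ≤ _ := abs_integral_mul_sub_integral_mul_mixtureEstimate_le_of_lipschitz
        (fun t θ => (hνpos t θ).le) hνint (fun t => hfmeas.of_uncurry_right.aemeasurable) hR
        hfbound hEnv hPol (fun j _ => (pow_pos hω0 j).le) hP (fun j : ℕ => T - j) (T + 1 + i)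
    _ = _ := by
      simp_rw [hdist i]
      rw [mul_div_assoc, sum_range_pow_mul_add_div_geom_sum hω1.ne hP.ne']

/-- Bias bound for the multiple-importance-sampling estimator
(tighter general form, 0 < ω < 1). -/
theorem bias_bound_general
    {Θ : Type*} [MeasurableSpace Θ] (μ : Measure Θ)
    (T : ℤ) (α β : ℕ) (hα : 0 < α) (hβ : 0 < β) (hT : (α : ℤ) ≤ T)
    (ν : ℤ → Θ → ℝ)
    (hνmeas : ∀ t, Measurable (ν t))
    (hνpos : ∀ t θ, 0 < ν t θ)
    (hνint : ∀ t, ∫ θ, ν t θ ∂μ = 1)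
    (f : Θ → ℤ → ℝ)
    (hfmeas : Measurable (Function.uncurry f))
    (Rmax : ℝ) (hfbound : ∀ θ t, |f θ t| ≤ Rmax)
    (LM : ℝ) (hLM : 0 ≤ LM)
    (hEnv : ∀ θ t t', |f θ t - f θ t'| ≤ LM * |(t : ℝ) - (t' : ℝ)|)
    (Lν : ℝ) (hLν : 0 ≤ Lν)
    (hPol : ∀ t t', ∫ θ, |ν t θ - ν t' θ| ∂μ ≤ Lν * |(t : ℝ) - (t' : ℝ)|)
    (γ ω : ℝ) (hγ : γ ∈ Set.Ico (0 : ℝ) 1) (hω : ω ∈ Set.Ioo (0 : ℝ) 1) :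
    |(∑ i ∈ Finset.range β, γ ^ i * ∫ θ, ν (T + 1 + i) θ * f θ (T + 1 + i) ∂μ)
      - ∑ i ∈ Finset.range β, γ ^ i * ∫ θ, ν (T + 1 + i) θ *
          ((∑ j ∈ Finset.range α, ω ^ j * ν (T - j) θ * f θ (T - j)) /
            ∑ k ∈ Finset.range α, ω ^ k * ν (T - k) θ) ∂μ|
      ≤ (LM + 2 * Rmax * Lν) * ((1 - γ ^ β) / (1 - γ))
          * (ω * (1 - (α : ℝ) * ω ^ (α - 1) + ((α : ℝ) - 1) * ω ^ α)
              / ((1 - ω) * (1 - ω ^ α)) + 1 / (1 - γ)) :=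
  bias_bound_general_general μ T α β hα ν hνpos hνint f hfmeas Rmax hfbound LM hLM hEnv Lν hLν hPol
    γ ω hγ hω
end

section
/- Bias bound for the multiple-importance-sampling estimator with uniform weighting (ω = 1): under the smoothly-changing assumptions, the absolute difference between J = Σ_{s=T+1}^{T+β} γ^{s-T-1} ∫_Θ ν_s(θ) f(θ,s) dμ(θ) and Ĵ = Σ_{s=T+1}^{T+β} γ^{s-T-1} ∫_Θ ν_s(θ) · [ Σ_{t=T-α+1}^{T} ν_t(θ) f(θ,t) ] / [ Σ_{k=T-α+1}^{T} ν_k(θ) ] dμ(θ) satisfies |J − Ĵ| ≤ (L_M + 2 R_max L_ν) · ((1−γ^β)/(1−γ)) · ( (α−1)/2 + 1/(1−γ) ). -/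
/-!
Write `a t = ∫ ν_t f(·, t)` and `b t = ∫ ν_t Φ`, where `Φ` is the average of the `f(·, T - j)`
self-normalised by the weights `ν_{T - j}`, so that `J` and `Ĵ` are the discounted sums of the
`a s` and `b s`. Both are Lipschitz in `t`, with constants `L_M + R_max L_ν` and `R_max L_ν`, and
self-normalisation gives `∑_j b (T - j) = ∑_j a (T - j)`. Hence `a s - b s` is the average of the
increments `a s - a (T - j)` and `b (T - j) - b s`, at most `L_M + 2 R_max L_ν` times the mean
distance `s - T + (α - 1) / 2` from `s` to the window; summing against `γ ^ (s - T - 1)` gives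
the bound.
-/

open MeasureTheory Finset

lemma sum_range_add_natCast (a : ℝ) (n : ℕ) :
    ∑ j ∈ range n, (a + j) = n * (a + (n - 1) / 2) := by
  induction n with
  | zero => simp
  | succ n ih => rw [sum_range_succ, ih]; push_cast; ring

lemma sum_range_succ_mul_pow {γ : ℝ} (hγ : γ ≠ 1) (n : ℕ) :
    ∑ i ∈ range n, ((i : ℝ) + 1) * γ ^ i
      = (1 - γ ^ n) / (1 - γ) ^ 2 - n * γ ^ n / (1 - γ) := by
  have h : (1 : ℝ) - γ ≠ 0 := sub_ne_zero.mpr hγ.symm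
  induction n with
  | zero => simp
  | succ n ih =>
    rw [sum_range_succ, ih]
    field_simp
    push_cast
    ring

lemma sum_range_pow_mul_le {γ C : ℝ} (hγ₀ : 0 ≤ γ) (hγ₁ : γ < 1) (hC : 0 ≤ C) (c : ℝ) (n : ℕ) :
    ∑ i ∈ range n, γ ^ i * (C * ((i + 1) + c))
      ≤ C * ((1 - γ ^ n) / (1 - γ)) * (c + 1 / (1 - γ)) := by
  have h₁ : (1 : ℝ) - γ ≠ 0 := by linarith
  have hgeom : ∑ i ∈ range n, γ ^ i = (1 - γ ^ n) / (1 - γ) := by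
    rw [geom_sum_eq hγ₁.ne, div_eq_div_iff (by linarith) h₁]
    ring
  have hsplit : ∑ i ∈ range n, γ ^ i * (C * ((i + 1) + c))
      = C * (c * ∑ i ∈ range n, γ ^ i + ∑ i ∈ range n, ((i : ℝ) + 1) * γ ^ i) := by
    rw [mul_sum, ← sum_add_distrib, mul_sum]
    exact sum_congr rfl fun i _ => by ring
  have htail : 0 ≤ n * γ ^ n / (1 - γ) := div_nonneg (by positivity) (by linarith)
  rw [hsplit, hgeom, sum_range_succ_mul_pow hγ₁.ne]
  calc C * (c * ((1 - γ ^ n) / (1 - γ)) + ((1 - γ ^ n) / (1 - γ) ^ 2 - n * γ ^ n / (1 - γ)))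
      ≤ C * (c * ((1 - γ ^ n) / (1 - γ)) + (1 - γ ^ n) / (1 - γ) ^ 2) := by
        gcongr; linarith
    _ = C * ((1 - γ ^ n) / (1 - γ)) * (c + 1 / (1 - γ)) := by
        field_simp

lemma abs_sum_mul_div_sum_le {ι : Type*} {s : Finset ι} {w x : ι → ℝ} {R : ℝ}
    (hw : ∀ j ∈ s, 0 ≤ w j) (hpos : 0 < ∑ j ∈ s, w j) (hx : ∀ j ∈ s, |x j| ≤ R) :
    |(∑ j ∈ s, w j * x j) / ∑ j ∈ s, w j| ≤ R := by
  rw [abs_div, abs_of_pos hpos, div_le_iff₀ hpos, mul_sum]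
  refine (abs_sum_le_sum_abs _ _).trans (sum_le_sum fun j hj => ?_)
  rw [abs_mul, abs_of_nonneg (hw j hj), mul_comm R]
  exact mul_le_mul_of_nonneg_left (hx j hj) (hw j hj)

lemma abs_sub_le_of_sum_eq_sum {X ι : Type*} [PseudoMetricSpace X] {J K : X → ℝ} {L₁ L₂ : ℝ}
    (hJ : ∀ x y, |J x - J y| ≤ L₁ * dist x y) (hK : ∀ x y, |K x - K y| ≤ L₂ * dist x y)
    {s : Finset ι} (hs : s.Nonempty) {u : ι → X}
    (hJK : ∑ j ∈ s, K (u j) = ∑ j ∈ s, J (u j)) (x : X) :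
    |J x - K x| ≤ (L₁ + L₂) * (∑ j ∈ s, dist x (u j)) / #s := by
  have hcard : (0 : ℝ) < #s := by exact_mod_cast hs.card_pos
  have hsplit : #s * (J x - K x)
      = ∑ j ∈ s, (J x - J (u j)) + ∑ j ∈ s, (K (u j) - K x) := by
    simp only [sum_sub_distrib, hJK, sum_const, nsmul_eq_mul]
    ring
  rw [le_div_iff₀ hcard, mul_comm, ← abs_of_pos hcard, ← abs_mul, hsplit]
  calc |∑ j ∈ s, (J x - J (u j)) + ∑ j ∈ s, (K (u j) - K x)|
      ≤ ∑ j ∈ s, L₁ * dist x (u j) + ∑ j ∈ s, L₂ * dist x (u j) := by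
        refine (abs_add_le _ _).trans (add_le_add ?_ ?_)
        · exact (abs_sum_le_sum_abs _ _).trans (sum_le_sum fun j _ => hJ _ _)
        · refine (abs_sum_le_sum_abs _ _).trans (sum_le_sum fun j _ => ?_)
          rw [dist_comm]
          exact hK _ _
    _ = (L₁ + L₂) * ∑ j ∈ s, dist x (u j) := by
        rw [← sum_add_distrib, mul_sum]
        exact sum_congr rfl fun j _ => by ring

section Integrals

variable {Θ : Type*} [MeasurableSpace Θ] {μ : Measure Θ}

lemma abs_integral_mul_sub_integral_mul_le_s2 {p q g : Θ → ℝ} {R : ℝ}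
    (hp : Integrable p μ) (hq : Integrable q μ) (hg : AEStronglyMeasurable g μ)
    (hgR : ∀ θ, |g θ| ≤ R) :
    |∫ θ, p θ * g θ ∂μ - ∫ θ, q θ * g θ ∂μ| ≤ R * ∫ θ, |p θ - q θ| ∂μ := by
  have hgR' : ∀ᵐ θ ∂μ, ‖g θ‖ ≤ R := ae_of_all _ hgR
  rw [← integral_sub (hp.mul_bdd hg hgR') (hq.mul_bdd hg hgR'), ← integral_const_mul]
  simp_rw [← sub_mul]
  refine abs_integral_le_integral_abs.trans
    (integral_mono ((hp.sub hq).mul_bdd hg hgR').abs ((hp.sub hq).abs.const_mul R) fun θ => ?_)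
  rw [abs_mul, mul_comm R]
  exact mul_le_mul_of_nonneg_left (hgR θ) (abs_nonneg _)

lemma abs_integral_mul_sub_integral_mul_le_add {p q g h : Θ → ℝ} {ε R : ℝ}
    (hp₀ : ∀ θ, 0 ≤ p θ) (hp₁ : ∫ θ, p θ ∂μ = 1) (hq : Integrable q μ)
    (hg : AEStronglyMeasurable g μ) (hh : AEStronglyMeasurable h μ)
    (hgh : ∀ θ, |g θ - h θ| ≤ ε) (hhR : ∀ θ, |h θ| ≤ R) :
    |∫ θ, p θ * g θ ∂μ - ∫ θ, q θ * h θ ∂μ| ≤ ε + R * ∫ θ, |p θ - q θ| ∂μ := by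
  have hp : Integrable p μ := integrable_of_integral_eq_one hp₁
  have hgR : ∀ᵐ θ ∂μ, ‖g θ‖ ≤ ε + R := ae_of_all _ fun θ => by
    rw [Real.norm_eq_abs]
    linarith [abs_sub_abs_le_abs_sub (g θ) (h θ), hgh θ, hhR θ]
  have hdiff : ∫ θ, p θ * g θ ∂μ - ∫ θ, p θ * h θ ∂μ = ∫ θ, p θ * (g θ - h θ) ∂μ := by
    simp_rw [mul_sub]
    exact (integral_sub (hp.mul_bdd hg hgR) (hp.mul_bdd hh (ae_of_all _ hhR))).symm
  have hε : |∫ θ, p θ * (g θ - h θ) ∂μ| ≤ ε := by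
    calc |∫ θ, p θ * (g θ - h θ) ∂μ| ≤ ∫ θ, p θ * ε ∂μ := by
          refine abs_integral_le_integral_abs.trans
            (integral_mono (hp.mul_bdd (hg.sub hh) (ae_of_all _ hgh)).abs (hp.mul_const ε)
              fun θ => ?_)
          rw [abs_mul, abs_of_nonneg (hp₀ θ)]
          exact mul_le_mul_of_nonneg_left (hgh θ) (hp₀ θ)
      _ = ε := by rw [integral_mul_const, hp₁, one_mul]
  have hR := abs_integral_mul_sub_integral_mul_le_s2 hp hq hh hhR
  calc |∫ θ, p θ * g θ ∂μ - ∫ θ, q θ * h θ ∂μ|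
      = |∫ θ, p θ * (g θ - h θ) ∂μ + (∫ θ, p θ * h θ ∂μ - ∫ θ, q θ * h θ ∂μ)| := by
        rw [← hdiff]; ring_nf
    _ ≤ ε + R * ∫ θ, |p θ - q θ| ∂μ := (abs_add_le _ _).trans (add_le_add hε hR)

lemma abs_integral_sub_integral_selfNormalized_le {ι : Type*} {ν : ℤ → Θ → ℝ} {f : Θ → ℤ → ℝ}
    {R LM Lν : ℝ} (hνmeas : ∀ t, Measurable (ν t)) (hνpos : ∀ t θ, 0 < ν t θ)
    (hνint : ∀ t, ∫ θ, ν t θ ∂μ = 1) (hfmeas : ∀ t, Measurable fun θ => f θ t)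
    (hfbound : ∀ θ t, |f θ t| ≤ R)
    (hEnv : ∀ θ t t', |f θ t - f θ t'| ≤ LM * |(t : ℝ) - (t' : ℝ)|)
    (hPol : ∀ t t', ∫ θ, |ν t θ - ν t' θ| ∂μ ≤ Lν * |(t : ℝ) - (t' : ℝ)|)
    {s : Finset ι} (hs : s.Nonempty) (u : ι → ℤ) (t : ℤ) :
    |∫ θ, ν t θ * f θ t ∂μ
        - ∫ θ, ν t θ * ((∑ j ∈ s, ν (u j) θ * f θ (u j)) / ∑ j ∈ s, ν (u j) θ) ∂μ|
      ≤ (LM + 2 * R * Lν) * (∑ j ∈ s, |(t : ℝ) - u j|) / #s := by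
  have hR : 0 ≤ R := by
    rcases isEmpty_or_nonempty Θ with _ | ⟨⟨θ⟩⟩
    · exact absurd (hνint t) (by rw [integral_of_isEmpty]; exact zero_ne_one)
    · exact (abs_nonneg _).trans (hfbound θ t)
  set Φ := fun θ => (∑ j ∈ s, ν (u j) θ * f θ (u j)) / ∑ j ∈ s, ν (u j) θ
  have hνintegrable : ∀ t, Integrable (ν t) μ := fun t => integrable_of_integral_eq_one (hνint t)
  have hweights : ∀ θ, 0 < ∑ j ∈ s, ν (u j) θ := fun θ => sum_pos (fun j _ => hνpos _ θ) hs
  have hΦmeas : Measurable Φ :=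
    (Finset.measurable_sum _ fun j _ => (hνmeas _).mul (hfmeas _)).div
      (Finset.measurable_sum _ fun j _ => hνmeas _)
  have hΦbound : ∀ θ, |Φ θ| ≤ R := fun θ =>
    abs_sum_mul_div_sum_le (fun j _ => (hνpos _ θ).le) (hweights θ) fun j _ => hfbound θ _
  have ha : ∀ t₁ t₂ : ℤ, |∫ θ, ν t₁ θ * f θ t₁ ∂μ - ∫ θ, ν t₂ θ * f θ t₂ ∂μ|
      ≤ (LM + R * Lν) * dist t₁ t₂ := fun t₁ t₂ => by
    refine (abs_integral_mul_sub_integral_mul_le_add (fun θ => (hνpos t₁ θ).le) (hνint t₁)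
      (hνintegrable t₂) (hfmeas t₁).aestronglyMeasurable (hfmeas t₂).aestronglyMeasurable
      (fun θ => hEnv θ t₁ t₂) fun θ => hfbound θ t₂).trans ?_
    rw [Int.dist_eq, add_mul, mul_assoc]
    gcongr
    exact hPol t₁ t₂
  have hb : ∀ t₁ t₂ : ℤ, |∫ θ, ν t₁ θ * Φ θ ∂μ - ∫ θ, ν t₂ θ * Φ θ ∂μ|
      ≤ R * Lν * dist t₁ t₂ := fun t₁ t₂ => by
    refine (abs_integral_mul_sub_integral_mul_le_s2 (hνintegrable t₁) (hνintegrable t₂)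
      hΦmeas.aestronglyMeasurable hΦbound).trans ?_
    rw [Int.dist_eq, mul_assoc]
    gcongr
    exact hPol t₁ t₂
  have hselfNormalized : ∑ j ∈ s, ∫ θ, ν (u j) θ * Φ θ ∂μ
      = ∑ j ∈ s, ∫ θ, ν (u j) θ * f θ (u j) ∂μ := by
    rw [← integral_finsetSum _ fun j _ => (hνintegrable _).mul_bdd hΦmeas.aestronglyMeasurable
        (ae_of_all _ hΦbound),
      ← integral_finsetSum _ fun j _ => (hνintegrable _).mul_bdd (hfmeas _).aestronglyMeasurable
        (ae_of_all _ fun θ => hfbound θ _)]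
    refine integral_congr_ae (ae_of_all _ fun θ => ?_)
    simp only [← sum_mul, Φ]
    exact mul_div_cancel₀ _ (hweights θ).ne'
  refine (abs_sub_le_of_sum_eq_sum ha hb hs hselfNormalized t).trans_eq ?_
  simp only [Int.dist_eq]
  ring

end Integrals

theorem bias_bound_uniform_general
    {Θ : Type*} [MeasurableSpace Θ] (μ : Measure Θ)
    (T : ℤ) (α β : ℕ) (hα : 0 < α)
    (ν : ℤ → Θ → ℝ)
    (hνmeas : ∀ t, Measurable (ν t))
    (hνpos : ∀ t θ, 0 < ν t θ)
    (hνint : ∀ t, ∫ θ, ν t θ ∂μ = 1)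
    (f : Θ → ℤ → ℝ)
    (hfmeas : Measurable (Function.uncurry f))
    (Rmax : ℝ) (hfbound : ∀ θ t, |f θ t| ≤ Rmax)
    (LM : ℝ)
    (hEnv : ∀ θ t t', |f θ t - f θ t'| ≤ LM * |(t : ℝ) - (t' : ℝ)|)
    (Lν : ℝ)
    (hPol : ∀ t t', ∫ θ, |ν t θ - ν t' θ| ∂μ ≤ Lν * |(t : ℝ) - (t' : ℝ)|)
    (γ : ℝ) (hγ : γ ∈ Set.Ico (0 : ℝ) 1) :
    |(∑ i ∈ Finset.range β, γ ^ i * ∫ θ, ν (T + 1 + i) θ * f θ (T + 1 + i) ∂μ)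
      - ∑ i ∈ Finset.range β, γ ^ i * ∫ θ, ν (T + 1 + i) θ *
          ((∑ j ∈ Finset.range α, ν (T - j) θ * f θ (T - j)) /
            ∑ k ∈ Finset.range α, ν (T - k) θ) ∂μ|
      ≤ (LM + 2 * Rmax * Lν) * ((1 - γ ^ β) / (1 - γ))
          * (((α : ℝ) - 1) / 2 + 1 / (1 - γ)) := by
  obtain ⟨hγ₀, hγ₁⟩ := hγ
  have hαpos : (0 : ℝ) < α := by exact_mod_cast hα
  have hstep : ∀ i : ℕ, |∫ θ, ν (T + 1 + i) θ * f θ (T + 1 + i) ∂μ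
      - ∫ θ, ν (T + 1 + i) θ * ((∑ j ∈ range α, ν (T - j) θ * f θ (T - j)) /
            ∑ k ∈ range α, ν (T - k) θ) ∂μ|
      ≤ (LM + 2 * Rmax * Lν) * ((i + 1) + ((α : ℝ) - 1) / 2) := fun i => by
    have h := abs_integral_sub_integral_selfNormalized_le hνmeas hνpos hνint
      (fun t => hfmeas.comp measurable_prodMk_right) hfbound hEnv hPol
      (nonempty_range_iff.mpr hα.ne') (fun j : ℕ => T - j) (T + 1 + i)
    have hdist : ∀ j : ℕ, |((T + 1 + i : ℤ) : ℝ) - ((T - j : ℤ) : ℝ)| = i + 1 + j := fun j => by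
      rw [show ((T + 1 + i : ℤ) : ℝ) - ((T - j : ℤ) : ℝ) = i + 1 + j by push_cast; ring]
      exact abs_of_nonneg (by positivity)
    simp only [hdist, sum_range_add_natCast, card_range] at h
    rwa [mul_div_assoc, mul_div_cancel_left₀ _ hαpos.ne'] at h
  have hC : 0 ≤ LM + 2 * Rmax * Lν :=
    nonneg_of_mul_nonneg_left ((abs_nonneg _).trans (hstep 0)) (by push_cast; linarith)
  rw [← sum_sub_distrib]
  refine (abs_sum_le_sum_abs _ _).trans ((sum_le_sum fun i _ => ?_).trans
    (sum_range_pow_mul_le hγ₀ hγ₁ hC _ β))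
  rw [← mul_sub, abs_mul, abs_of_nonneg (pow_nonneg hγ₀ i)]
  exact mul_le_mul_of_nonneg_left (hstep i) (pow_nonneg hγ₀ i)

/-- Bias bound for the multiple-importance-sampling estimator with
uniform weighting (ω = 1). -/
theorem bias_bound_uniform
    {Θ : Type*} [MeasurableSpace Θ] (μ : Measure Θ)
    (T : ℤ) (α β : ℕ) (hα : 0 < α) (hβ : 0 < β) (hT : (α : ℤ) ≤ T)
    (ν : ℤ → Θ → ℝ)
    (hνmeas : ∀ t, Measurable (ν t))
    (hνpos : ∀ t θ, 0 < ν t θ)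
    (hνint : ∀ t, ∫ θ, ν t θ ∂μ = 1)
    (f : Θ → ℤ → ℝ)
    (hfmeas : Measurable (Function.uncurry f))
    (Rmax : ℝ) (hfbound : ∀ θ t, |f θ t| ≤ Rmax)
    (LM : ℝ) (hLM : 0 ≤ LM)
    (hEnv : ∀ θ t t', |f θ t - f θ t'| ≤ LM * |(t : ℝ) - (t' : ℝ)|)
    (Lν : ℝ) (hLν : 0 ≤ Lν)
    (hPol : ∀ t t', ∫ θ, |ν t θ - ν t' θ| ∂μ ≤ Lν * |(t : ℝ) - (t' : ℝ)|)
    (γ : ℝ) (hγ : γ ∈ Set.Ico (0 : ℝ) 1) :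
    |(∑ i ∈ Finset.range β, γ ^ i * ∫ θ, ν (T + 1 + i) θ * f θ (T + 1 + i) ∂μ)
      - ∑ i ∈ Finset.range β, γ ^ i * ∫ θ, ν (T + 1 + i) θ *
          ((∑ j ∈ Finset.range α, ν (T - j) θ * f θ (T - j)) /
            ∑ k ∈ Finset.range α, ν (T - k) θ) ∂μ|
      ≤ (LM + 2 * Rmax * Lν) * ((1 - γ ^ β) / (1 - γ))
          * (((α : ℝ) - 1) / 2 + 1 / (1 - γ)) :=
  bias_bound_uniform_general μ T α β hα ν hνmeas hνpos hνint f hfmeas Rmax hfbound LM hEnv Lν hPol γ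
    hγ
end

section
/- Variance bound for the combined objective: define the past-return term J̌ = (1/C_ω) Σ_{t=T-α+1}^{T} ω^{T-t} γ^{t-T+α-1} r_t and the importance-sampling term Ĵ = Σ_{t=T-α+1}^{T} ω^{T-t} r_t · [ Σ_{s=T+1}^{T+β} γ^{s-T-1} ν_s(θ_t) ] / [ Σ_{k=T-α+1}^{T} ω^{T-k} ν_k(θ_t) ]. Then the variance of J̌ + Ĵ satisfies Var[J̌ + Ĵ] ≤ 2 R_max² ( C_γ(α)² + C_γ(β)² · d₂( Σ_{s=T+1}^{T+β} (γ^{s-T-1}/C_γ(β)) ν_s ‖ Σ_{t=T-α+1}^{T} (ω^{T-t}/C_ω) ν_t ) ). -/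
open MeasureTheory Finset ProbabilityTheory

/-!
Bound the variance by the second moment and use `(a + b)² ≤ 2a² + 2b²`. The past-return term is
an `ω`-weighted average of the rewards with coefficients `γ^k ≤ 1`, so its square is at most
`R_max² ≤ R_max² C_γ(α)²`. For the importance-sampling term, Cauchy–Schwarz with weights `ω^j`
bounds its square by `R_max² C_ω Σ_j ω^j F(θ_j)²`, where `F` is the ratio of the two unnormalised
mixtures. Since `θ_j` has density `ν_{T-j}`, taking expectations turns `Σ_j ω^j E[F(θ_j)²]` into
`∫ (Σ_j ω^j ν_{T-j}) F² dμ`, and this integrand is `C_γ(β)² / C_ω` times the integrand of `d₂`.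
-/

lemma ite_geom_eq_sum_range_pow {x : ℝ} (hx : x ≤ 1) (n : ℕ) :
    (if x < 1 then (1 - x ^ n) / (1 - x) else (n : ℝ)) = ∑ i ∈ range n, x ^ i := by
  split_ifs with h
  · rw [geom_sum_eq h.ne, ← neg_div_neg_eq, neg_sub, neg_sub]
  · simp [le_antisymm hx (not_lt.1 h)]

lemma sum_mul_sum_div_sum_mul {ι : Type*} (s : Finset ι) {a : ι → ℝ} (ha : ∀ i ∈ s, 0 < a i)
    (g : ι → ℝ) : (∑ j ∈ s, a j) * ∑ i ∈ s, a i / (∑ j ∈ s, a j) * g i = ∑ i ∈ s, a i * g i := by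
  rw [mul_sum]
  refine sum_congr rfl fun i hi => ?_
  have : 0 < ∑ j ∈ s, a j := sum_pos ha ⟨i, hi⟩
  field_simp

lemma sum_mul_div_sq_eq_normalized {ι κ : Type*} (s : Finset ι) (t : Finset κ) {a : ι → ℝ}
    {b : κ → ℝ} (ha : ∀ i ∈ s, 0 < a i) (hb : ∀ j ∈ t, 0 < b j) (g : ι → ℝ) (h : κ → ℝ) :
    (∑ j ∈ t, b j * h j) * ((∑ i ∈ s, a i * g i) / ∑ j ∈ t, b j * h j) ^ 2 =
      (∑ i ∈ s, a i) ^ 2 / (∑ j ∈ t, b j) *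
        ((∑ i ∈ s, a i / (∑ i ∈ s, a i) * g i) ^ 2 / ∑ j ∈ t, b j / (∑ j ∈ t, b j) * h j) := by
  rw [← sum_mul_sum_div_sum_mul s ha, ← sum_mul_sum_div_sum_mul t hb]
  set B := ∑ j ∈ t, b j
  set q := ∑ j ∈ t, b j / B * h j
  rcases eq_or_ne (B * q) 0 with hBq | hBq
  · rcases mul_eq_zero.1 hBq with hzero | hzero <;> simp [hzero]
  · obtain ⟨hB, hq⟩ := mul_ne_zero_iff.1 hBq
    field_simp

section WeightedSums

variable {ι : Type*} (s : Finset ι) {w : ι → ℝ} {R : ℝ}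

lemma sq_one_div_sum_mul_sum_le {c r : ι → ℝ} (hw : ∀ j ∈ s, 0 ≤ w j) (hc : ∀ j ∈ s, |c j| ≤ 1)
    (hr : ∀ j ∈ s, |r j| ≤ R) :
    ((1 / ∑ j ∈ s, w j) * ∑ j ∈ s, w j * c j * r j) ^ 2 ≤ R ^ 2 := by
  rcases (sum_nonneg hw).eq_or_lt with hW | hW
  · simpa [← hW] using sq_nonneg R
  have habs : |∑ j ∈ s, w j * c j * r j| ≤ (∑ j ∈ s, w j) * R := by
    rw [sum_mul]
    refine (abs_sum_le_sum_abs _ _).trans (sum_le_sum fun j hj => ?_)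
    rw [abs_mul, abs_mul, abs_of_nonneg (hw j hj), mul_assoc]
    gcongr
    · exact hw j hj
    · simpa using mul_le_mul (hc j hj) (hr j hj) (abs_nonneg _) zero_le_one
  refine sq_le_sq.2 (le_abs.2 (Or.inl ?_))
  rw [abs_mul, abs_of_pos (one_div_pos.2 hW), one_div, inv_mul_le_iff₀ hW]
  exact habs

lemma sq_sum_mul_le_of_abs_le {r a : ι → ℝ} (hw : ∀ j ∈ s, 0 ≤ w j) (hr : ∀ j ∈ s, |r j| ≤ R) :
    (∑ j ∈ s, w j * r j * a j) ^ 2 ≤ R ^ 2 * (∑ j ∈ s, w j) * ∑ j ∈ s, w j * a j ^ 2 := by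
  calc (∑ j ∈ s, w j * r j * a j) ^ 2
      ≤ (∑ j ∈ s, w j) * ∑ j ∈ s, w j * (r j * a j) ^ 2 :=
        sum_sq_le_sum_mul_sum_of_sq_le_mul s hw
          (fun j hj => mul_nonneg (hw j hj) (sq_nonneg _)) (fun j _ => le_of_eq (by ring))
    _ ≤ (∑ j ∈ s, w j) * ∑ j ∈ s, R ^ 2 * (w j * a j ^ 2) := by
        have hW : 0 ≤ ∑ j ∈ s, w j := sum_nonneg hw
        have hr2 : ∀ j ∈ s, r j ^ 2 ≤ R ^ 2 := fun j hj =>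
          sq_le_sq.2 ((hr j hj).trans (le_abs_self R))
        refine mul_le_mul_of_nonneg_left (sum_le_sum fun j hj => ?_) hW
        rw [mul_pow, mul_left_comm]
        exact mul_le_mul_of_nonneg_right (hr2 j hj) (mul_nonneg (hw j hj) (sq_nonneg _))
    _ = R ^ 2 * (∑ j ∈ s, w j) * ∑ j ∈ s, w j * a j ^ 2 := by
        rw [← mul_sum]
        ring

end WeightedSums

lemma variance_add_le_two_mul {Ω : Type*} [MeasurableSpace Ω] {P : Measure Ω}
    [IsProbabilityMeasure P] {X Y : Ω → ℝ}
    (hX : AEStronglyMeasurable X P) (hY : AEStronglyMeasurable Y P)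
    (hX2 : Integrable (fun ω => X ω ^ 2) P) (hY2 : Integrable (fun ω => Y ω ^ 2) P) :
    variance (fun ω => X ω + Y ω) P ≤ 2 * (∫ ω, X ω ^ 2 ∂P + ∫ ω, Y ω ^ 2 ∂P) := by
  calc variance (fun ω => X ω + Y ω) P ≤ ∫ ω, (X ω + Y ω) ^ 2 ∂P :=
        variance_le_expectation_sq (hX.add hY)
    _ ≤ ∫ ω, 2 * (X ω ^ 2 + Y ω ^ 2) ∂P :=
        integral_mono_of_nonneg (ae_of_all _ fun _ => sq_nonneg _)
          ((hX2.add hY2).const_mul 2) (ae_of_all _ fun _ => add_sq_le)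
    _ = 2 * (∫ ω, X ω ^ 2 ∂P + ∫ ω, Y ω ^ 2 ∂P) := by
        rw [integral_const_mul, integral_add hX2 hY2]

section ChangeOfVariables

variable {Θ Ω : Type*} [MeasurableSpace Θ] [MeasurableSpace Ω] {μ : Measure Θ} {P : Measure Ω}

lemma integrable_comp_iff_of_map_eq_withDensity {X : Ω → Θ} {ρ f : Θ → ℝ}
    (hX : AEMeasurable X P) (hρ : Measurable ρ) (hρ0 : ∀ x, 0 ≤ ρ x)
    (hlaw : P.map X = μ.withDensity fun x => ENNReal.ofReal (ρ x))
    (hf : AEStronglyMeasurable f (P.map X)) :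
    Integrable (fun ω => f (X ω)) P ↔ Integrable (fun x => ρ x * f x) μ := by
  change Integrable (f ∘ X) P ↔ _
  rw [← integrable_map_measure hf hX, hlaw, integrable_withDensity_iff hρ.ennreal_ofReal
    (ae_of_all _ fun _ => ENNReal.ofReal_lt_top)]
  simp_rw [ENNReal.toReal_ofReal (hρ0 _), mul_comm]

lemma integral_comp_eq_of_map_eq_withDensity {X : Ω → Θ} {ρ f : Θ → ℝ}
    (hX : AEMeasurable X P) (hρ : Measurable ρ) (hρ0 : ∀ x, 0 ≤ ρ x)
    (hlaw : P.map X = μ.withDensity fun x => ENNReal.ofReal (ρ x))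
    (hf : AEStronglyMeasurable f (P.map X)) :
    ∫ ω, f (X ω) ∂P = ∫ x, ρ x * f x ∂μ := by
  rw [← integral_map hX hf, hlaw, integral_withDensity_eq_integral_toReal_smul
    hρ.ennreal_ofReal (ae_of_all _ fun _ => ENNReal.ofReal_lt_top)]
  simp_rw [ENNReal.toReal_ofReal (hρ0 _), smul_eq_mul]

variable {ι : Type*} (s : Finset ι) {X : ι → Ω → Θ} {ρ : ι → Θ → ℝ}

lemma integral_sum_comp_eq_integral_mixture (w : ι → ℝ) {g : Θ → ℝ}
    (hX : ∀ j ∈ s, AEMeasurable (X j) P) (hρ : ∀ j ∈ s, Measurable (ρ j))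
    (hρ0 : ∀ j ∈ s, ∀ x, 0 ≤ ρ j x)
    (hlaw : ∀ j ∈ s, P.map (X j) = μ.withDensity fun x => ENNReal.ofReal (ρ j x))
    (hg : Measurable g) (hint : ∀ j ∈ s, Integrable (fun x => ρ j x * g x) μ) :
    ∫ ω, ∑ j ∈ s, w j * g (X j ω) ∂P = ∫ x, (∑ j ∈ s, w j * ρ j x) * g x ∂μ := by
  have hcomp : ∀ j ∈ s, Integrable (fun ω => g (X j ω)) P := fun j hj =>
    (integrable_comp_iff_of_map_eq_withDensity (hX j hj) (hρ j hj) (hρ0 j hj) (hlaw j hj)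
      hg.aestronglyMeasurable).2 (hint j hj)
  simp_rw [sum_mul, mul_assoc]
  rw [integral_finsetSum _ fun j hj => (hcomp j hj).const_mul _,
    integral_finsetSum _ fun j hj => (hint j hj).const_mul _]
  refine sum_congr rfl fun j hj => ?_
  rw [integral_const_mul, integral_const_mul, integral_comp_eq_of_map_eq_withDensity (hX j hj)
    (hρ j hj) (hρ0 j hj) (hlaw j hj) hg.aestronglyMeasurable]

lemma integral_sq_sum_mul_comp_le {w : ι → ℝ} (hw : ∀ j ∈ s, 0 < w j)
    (hX : ∀ j ∈ s, AEMeasurable (X j) P) (hρ : ∀ j ∈ s, Measurable (ρ j))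
    (hρ0 : ∀ j ∈ s, ∀ x, 0 ≤ ρ j x)
    (hlaw : ∀ j ∈ s, P.map (X j) = μ.withDensity fun x => ENNReal.ofReal (ρ j x))
    {r : ι → Ω → ℝ} (hr : ∀ j ∈ s, AEStronglyMeasurable (r j) P) {R : ℝ}
    (hR : ∀ᵐ ω ∂P, ∀ j ∈ s, |r j ω| ≤ R) {f : Θ → ℝ} (hf : Measurable f)
    (hint : Integrable (fun x => (∑ j ∈ s, w j * ρ j x) * f x ^ 2) μ) :
    Integrable (fun ω => (∑ j ∈ s, w j * r j ω * f (X j ω)) ^ 2) P ∧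
      ∫ ω, (∑ j ∈ s, w j * r j ω * f (X j ω)) ^ 2 ∂P ≤
        R ^ 2 * (∑ j ∈ s, w j) * ∫ x, (∑ j ∈ s, w j * ρ j x) * f x ^ 2 ∂μ := by
  have hρf : ∀ j ∈ s, Integrable (fun x => ρ j x * f x ^ 2) μ := fun j hj =>
    (hint.const_mul (w j)⁻¹).mono' ((hρ j hj).mul (hf.pow_const 2)).aestronglyMeasurable
      (ae_of_all _ fun x => by
        rw [Real.norm_of_nonneg (mul_nonneg (hρ0 j hj x) (sq_nonneg _)),
          le_inv_mul_iff₀ (hw j hj), ← mul_assoc]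
        exact mul_le_mul_of_nonneg_right (single_le_sum (f := fun k => w k * ρ k x)
          (fun k hk => mul_nonneg (hw k hk).le (hρ0 k hk x)) hj) (sq_nonneg _))
  have hcomp : ∀ j ∈ s, Integrable (fun ω => f (X j ω) ^ 2) P := fun j hj =>
    (integrable_comp_iff_of_map_eq_withDensity (f := fun x => f x ^ 2) (hX j hj) (hρ j hj)
      (hρ0 j hj) (hlaw j hj) (hf.pow_const 2).aestronglyMeasurable).2 (hρf j hj)
  have hbound : Integrable
      (fun ω => R ^ 2 * (∑ j ∈ s, w j) * ∑ j ∈ s, w j * f (X j ω) ^ 2) P :=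
    (integrable_finsetSum _ fun j hj => (hcomp j hj).const_mul _).const_mul _
  have hpt : ∀ᵐ ω ∂P, (∑ j ∈ s, w j * r j ω * f (X j ω)) ^ 2 ≤
      R ^ 2 * (∑ j ∈ s, w j) * ∑ j ∈ s, w j * f (X j ω) ^ 2 :=
    hR.mono fun ω hω => sq_sum_mul_le_of_abs_le s (fun j hj => (hw j hj).le) hω
  have hmeas : AEStronglyMeasurable (fun ω => (∑ j ∈ s, w j * r j ω * f (X j ω)) ^ 2) P :=
    (aestronglyMeasurable_fun_sum s fun j hj => ((hr j hj).const_mul _).mul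
      (hf.comp_aemeasurable (hX j hj)).aestronglyMeasurable).pow 2
  refine ⟨hbound.mono' hmeas (hpt.mono fun ω h => by rwa [Real.norm_of_nonneg (sq_nonneg _)]),
    ?_⟩
  calc ∫ ω, (∑ j ∈ s, w j * r j ω * f (X j ω)) ^ 2 ∂P
      ≤ ∫ ω, R ^ 2 * (∑ j ∈ s, w j) * ∑ j ∈ s, w j * f (X j ω) ^ 2 ∂P :=
        integral_mono_of_nonneg (ae_of_all _ fun _ => sq_nonneg _) hbound hpt
    _ = R ^ 2 * (∑ j ∈ s, w j) * ∫ x, (∑ j ∈ s, w j * ρ j x) * f x ^ 2 ∂μ := by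
        rw [integral_const_mul, integral_sum_comp_eq_integral_mixture s w hX hρ hρ0 hlaw
          (hf.pow_const 2) hρf]

end ChangeOfVariables

theorem variance_bound_general
    {Θ : Type*} [MeasurableSpace Θ] (μ : Measure Θ)
    {Ω : Type*} [MeasurableSpace Ω] (P : Measure Ω) [IsProbabilityMeasure P]
    (T : ℤ) (α β : ℕ) (hα : 0 < α)
    (ν : ℤ → Θ → ℝ)
    (hνmeas : ∀ t, Measurable (ν t))
    (hνpos : ∀ t θ, 0 < ν t θ)
    (θt : ℕ → Ω → Θ) (hθmeas : ∀ j, Measurable (θt j))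
    (hθlaw : ∀ j ∈ Finset.range α,
      P.map (θt j) = μ.withDensity (fun x => ENNReal.ofReal (ν (T - j) x)))
    (rt : ℕ → Ω → ℝ) (hrmeas : ∀ j, Measurable (rt j))
    (Rmax : ℝ) (hr : ∀ j ∈ Finset.range α, ∀ᵐ ωe ∂P, |rt j ωe| ≤ Rmax)
    (γ ω : ℝ) (hγ : γ ∈ Set.Ioc (0 : ℝ) 1) (hω : ω ∈ Set.Ioc (0 : ℝ) 1)
    (Cγα Cγβ Cω : ℝ)
    (hCγα : Cγα = if γ < 1 then (1 - γ ^ α) / (1 - γ) else (α : ℝ))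
    (hCγβ : Cγβ = if γ < 1 then (1 - γ ^ β) / (1 - γ) else (β : ℝ))
    (hCω : Cω = if ω < 1 then (1 - ω ^ α) / (1 - ω) else (α : ℝ))
    (hd2fin : Integrable (fun x =>
      (∑ i ∈ Finset.range β, γ ^ i / Cγβ * ν (T + 1 + i) x) ^ 2 /
        ∑ j ∈ Finset.range α, ω ^ j / Cω * ν (T - j) x) μ) :
    variance (fun ωe =>
        ((1 / Cω) * ∑ j ∈ Finset.range α, ω ^ j * γ ^ (α - 1 - j) * rt j ωe)
        + ∑ j ∈ Finset.range α, ω ^ j * rt j ωe *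
            ((∑ i ∈ Finset.range β, γ ^ i * ν (T + 1 + i) (θt j ωe)) /
              ∑ k ∈ Finset.range α, ω ^ k * ν (T - k) (θt j ωe))) P
      ≤ 2 * Rmax ^ 2 * (Cγα ^ 2 + Cγβ ^ 2 *
          ∫ x, (∑ i ∈ Finset.range β, γ ^ i / Cγβ * ν (T + 1 + i) x) ^ 2 /
            ∑ j ∈ Finset.range α, ω ^ j / Cω * ν (T - j) x ∂μ) := by
  obtain ⟨hγ0, hγ1⟩ := hγ
  obtain ⟨hω0, hω1⟩ := hω
  rw [ite_geom_eq_sum_range_pow hγ1] at hCγα hCγβ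
  rw [ite_geom_eq_sum_range_pow hω1] at hCω
  subst hCγα hCγβ hCω
  have hCω0 : 0 < ∑ j ∈ range α, ω ^ j := sum_pos (fun j _ => pow_pos hω0 j) ⟨0, mem_range.2 hα⟩
  have hCγα1 : 1 ≤ ∑ i ∈ range α, γ ^ i := by
    simpa using single_le_sum (f := (γ ^ ·)) (fun i _ => (pow_pos hγ0 i).le) (mem_range.2 hα)
  have hR : ∀ᵐ ωe ∂P, ∀ j ∈ range α, |rt j ωe| ≤ Rmax := (Filter.eventually_all_finset _).2 hr
  have hpast : ∀ᵐ ωe ∂P, ‖((1 / ∑ j ∈ range α, ω ^ j) *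
      ∑ j ∈ range α, ω ^ j * γ ^ (α - 1 - j) * rt j ωe) ^ 2‖ ≤ Rmax ^ 2 :=
    hR.mono fun ωe h => by
      rw [Real.norm_of_nonneg (sq_nonneg _)]
      exact sq_one_div_sum_mul_sum_le (range α) (fun j _ => pow_nonneg hω0.le j)
        (fun j _ => by rw [abs_of_pos (pow_pos hγ0 _)]; exact pow_le_one₀ hγ0.le hγ1) h
  have hmix x := sum_mul_div_sq_eq_normalized (range β) (range α) (fun i _ => pow_pos hγ0 i)
    (fun j _ => pow_pos hω0 j) (fun i : ℕ => ν (T + 1 + i) x) (fun j : ℕ => ν (T - j) x)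
  obtain ⟨hIS_int, hIS⟩ := integral_sq_sum_mul_comp_le (range α) (w := (ω ^ ·))
    (fun j _ => pow_pos hω0 j) (fun j _ => (hθmeas j).aemeasurable) (fun j _ => hνmeas _)
    (fun j _ x => (hνpos _ x).le) hθlaw (fun j _ => (hrmeas j).aestronglyMeasurable) hR
    (by fun_prop) ((hd2fin.const_mul _).congr (ae_of_all _ fun x => (hmix x).symm))
  have hA2 : ∫ ωe, ((1 / ∑ j ∈ range α, ω ^ j) *
      ∑ j ∈ range α, ω ^ j * γ ^ (α - 1 - j) * rt j ωe) ^ 2 ∂P ≤ Rmax ^ 2 :=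
    (le_abs_self _).trans ((norm_integral_le_of_norm_le_const hpast).trans_eq (by simp))
  simp only [hmix] at hIS
  rw [integral_const_mul, mul_assoc _ (∑ j ∈ range α, ω ^ j), ← mul_assoc (∑ j ∈ range α, ω ^ j),
    mul_div_cancel₀ _ hCω0.ne'] at hIS
  refine (variance_add_le_two_mul (by fun_prop) (by fun_prop)
    (Integrable.of_bound (by fun_prop) _ hpast) hIS_int).trans ?_
  nlinarith [le_mul_of_one_le_right (sq_nonneg Rmax) (one_le_pow₀ (n := 2) hCγα1)]

/-- Variance bound for the combined objective (past-return term plus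
importance-sampling term). -/
theorem variance_bound
    {Θ : Type*} [MeasurableSpace Θ] (μ : Measure Θ)
    {Ω : Type*} [MeasurableSpace Ω] (P : Measure Ω) [IsProbabilityMeasure P]
    (T : ℤ) (α β : ℕ) (hα : 0 < α) (hβ : 0 < β) (hT : (α : ℤ) ≤ T)
    (ν : ℤ → Θ → ℝ)
    (hνmeas : ∀ t, Measurable (ν t))
    (hνpos : ∀ t θ, 0 < ν t θ)
    (hνint : ∀ t, ∫ θ, ν t θ ∂μ = 1)
    (θt : ℕ → Ω → Θ) (hθmeas : ∀ j, Measurable (θt j))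
    (hθlaw : ∀ j ∈ Finset.range α,
      P.map (θt j) = μ.withDensity (fun x => ENNReal.ofReal (ν (T - j) x)))
    (rt : ℕ → Ω → ℝ) (hrmeas : ∀ j, Measurable (rt j))
    (Rmax : ℝ) (hr : ∀ j ∈ Finset.range α, ∀ᵐ ωe ∂P, |rt j ωe| ≤ Rmax)
    (γ ω : ℝ) (hγ : γ ∈ Set.Ioc (0 : ℝ) 1) (hω : ω ∈ Set.Ioc (0 : ℝ) 1)
    (Cγα Cγβ Cω : ℝ)
    (hCγα : Cγα = if γ < 1 then (1 - γ ^ α) / (1 - γ) else (α : ℝ))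
    (hCγβ : Cγβ = if γ < 1 then (1 - γ ^ β) / (1 - γ) else (β : ℝ))
    (hCω : Cω = if ω < 1 then (1 - ω ^ α) / (1 - ω) else (α : ℝ))
    (hd2fin : Integrable (fun x =>
      (∑ i ∈ Finset.range β, γ ^ i / Cγβ * ν (T + 1 + i) x) ^ 2 /
        ∑ j ∈ Finset.range α, ω ^ j / Cω * ν (T - j) x) μ) :
    variance (fun ωe =>
        ((1 / Cω) * ∑ j ∈ Finset.range α, ω ^ j * γ ^ (α - 1 - j) * rt j ωe)
        + ∑ j ∈ Finset.range α, ω ^ j * rt j ωe *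
            ((∑ i ∈ Finset.range β, γ ^ i * ν (T + 1 + i) (θt j ωe)) /
              ∑ k ∈ Finset.range α, ω ^ k * ν (T - k) (θt j ωe))) P
      ≤ 2 * Rmax ^ 2 * (Cγα ^ 2 + Cγβ ^ 2 *
          ∫ x, (∑ i ∈ Finset.range β, γ ^ i / Cγβ * ν (T + 1 + i) x) ^ 2 /
            ∑ j ∈ Finset.range α, ω ^ j / Cω * ν (T - j) x ∂μ) :=
  variance_bound_general μ P T α β hα ν hνmeas hνpos θt hθmeas hθlaw rt hrmeas Rmax hr γ ω hγ hω Cγα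
    Cγβ Cω hCγα hCγβ hCω hd2fin
end

section
/- Divergence bound between the discounted future mixture and the exponentially-weighted past mixture: d₂( Σ_{s=T+1}^{T+β} (γ^{s-T-1}/C_γ(β)) ν_s ‖ Σ_{t=T-α+1}^{T} (ω^{T-t}/C_ω) ν_t ) ≤ (C_ω / C_γ(β)²) · ( Σ_{s=T+1}^{T+β} γ^{s-T-1} · ( Σ_{t=T-α+1}^{T} ω^{T-t} / d₂(ν_s ‖ ν_t) )^{-1/2} )². -/
/-!
Write the numerator mixture as `∑ᵢ aᵢ pᵢ = ∑ᵢⱼ lᵢⱼ aᵢ pᵢ` (with `∑ⱼ lᵢⱼ = 1`) and the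
denominator mixture as `∑ⱼ wⱼ rⱼ = ∑ᵢⱼ cᵢ wⱼ rⱼ` (with `∑ᵢ cᵢ = 1`). Sedrakyan's form of
Cauchy–Schwarz, `(∑ uₖ)² / ∑ vₖ ≤ ∑ uₖ² / vₖ`, applied pointwise to these `β·α` pieces and
integrated, bounds the divergence by `∑ᵢⱼ lᵢⱼ² aᵢ² d₂(pᵢ‖rⱼ) / (cᵢ wⱼ)`. Minimising over `l`
(for fixed `i`) and then over `c` gives `lᵢⱼ ∝ wⱼ / d₂(pᵢ‖rⱼ)`, `cᵢ ∝ aᵢ / √Hᵢ` with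
`Hᵢ = ∑ⱼ wⱼ / d₂(pᵢ‖rⱼ)`, and the bound `(∑ᵢ aᵢ / √Hᵢ)²`. The normalising constants factor out.
-/

open MeasureTheory Finset

section MixtureDivergence

variable {ι κ Θ : Type*} {s : Finset ι} {t : Finset κ}

theorem sq_sum_div_sum_le_sum_sum_sq_div (x : ι → ℝ) {y : κ → ℝ} {l : ι → κ → ℝ} {c : ι → ℝ}
    (hy : ∀ j ∈ t, 0 < y j) (hl : ∀ i ∈ s, ∑ j ∈ t, l i j = 1) (hc : ∀ i ∈ s, 0 < c i)
    (hc_sum : ∑ i ∈ s, c i = 1) :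
    (∑ i ∈ s, x i) ^ 2 / ∑ j ∈ t, y j ≤
      ∑ i ∈ s, ∑ j ∈ t, (l i j * x i) ^ 2 / (c i * y j) := by
  have hx : ∑ i ∈ s, x i = ∑ i ∈ s, ∑ j ∈ t, l i j * x i :=
    sum_congr rfl fun i hi => by rw [← sum_mul, hl i hi, one_mul]
  have hy_split : ∑ j ∈ t, y j = ∑ i ∈ s, ∑ j ∈ t, c i * y j := by
    rw [sum_comm]
    exact sum_congr rfl fun j _ => by rw [← sum_mul, hc_sum, one_mul]
  rw [hx, hy_split, ← sum_product', ← sum_product', ← sum_product']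
  exact sq_sum_div_le_sum_sq_div _ _ fun ij hij =>
    mul_pos (hc _ (mem_product.1 hij).1) (hy _ (mem_product.1 hij).2)

variable [MeasurableSpace Θ] {μ : Measure Θ}

theorem integral_sq_sum_div_sum_le_sum_sum {a : ι → ℝ} {w : κ → ℝ} {p : ι → Θ → ℝ}
    {r : κ → Θ → ℝ} {l : ι → κ → ℝ} {c : ι → ℝ}
    (hw : ∀ j ∈ t, 0 < w j) (hr : ∀ j ∈ t, ∀ θ, 0 < r j θ)
    (hl : ∀ i ∈ s, ∑ j ∈ t, l i j = 1) (hc : ∀ i ∈ s, 0 < c i) (hc_sum : ∑ i ∈ s, c i = 1)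
    (hint : ∀ i ∈ s, ∀ j ∈ t, Integrable (fun θ => p i θ ^ 2 / r j θ) μ) :
    ∫ θ, (∑ i ∈ s, a i * p i θ) ^ 2 / ∑ j ∈ t, w j * r j θ ∂μ ≤
      ∑ i ∈ s, ∑ j ∈ t, (l i j * a i) ^ 2 / (c i * w j) * ∫ θ, p i θ ^ 2 / r j θ ∂μ := by
  have hint_sum : Integrable (fun θ => ∑ i ∈ s, ∑ j ∈ t,
      (l i j * a i) ^ 2 / (c i * w j) * (p i θ ^ 2 / r j θ)) μ :=
    integrable_finsetSum _ fun i hi =>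
      integrable_finsetSum _ fun j hj => (hint i hi j hj).const_mul _
  have hpointwise : ∀ θ, (∑ i ∈ s, a i * p i θ) ^ 2 / ∑ j ∈ t, w j * r j θ ≤
      ∑ i ∈ s, ∑ j ∈ t, (l i j * a i) ^ 2 / (c i * w j) * (p i θ ^ 2 / r j θ) := fun θ => by
    refine (sq_sum_div_sum_le_sum_sum_sq_div _ (fun j hj => mul_pos (hw j hj) (hr j hj θ))
      hl hc hc_sum).trans_eq (sum_congr rfl fun i _ => sum_congr rfl fun j _ => ?_)
    ring
  calc ∫ θ, (∑ i ∈ s, a i * p i θ) ^ 2 / ∑ j ∈ t, w j * r j θ ∂μ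
      ≤ ∫ θ, ∑ i ∈ s, ∑ j ∈ t, (l i j * a i) ^ 2 / (c i * w j) * (p i θ ^ 2 / r j θ) ∂μ :=
        -- the left integrand needs no integrability: otherwise its integral is `0`
        integral_mono_of_nonneg (Filter.Eventually.of_forall fun θ => div_nonneg (sq_nonneg _)
          (sum_nonneg fun j hj => (mul_pos (hw j hj) (hr j hj θ)).le)) hint_sum
          (Filter.Eventually.of_forall hpointwise)
    _ = _ := by
        rw [integral_finsetSum _ fun i hi =>
          integrable_finsetSum _ fun j hj => (hint i hi j hj).const_mul _]
        refine sum_congr rfl fun i hi => ?_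
        rw [integral_finsetSum _ fun j hj => (hint i hi j hj).const_mul _]
        exact sum_congr rfl fun j _ => integral_const_mul _ _

theorem integral_sq_sum_div_sum_le_sq_sum (hs : s.Nonempty) (ht : t.Nonempty)
    {a : ι → ℝ} {w : κ → ℝ} {p : ι → Θ → ℝ} {r : κ → Θ → ℝ}
    (ha : ∀ i ∈ s, 0 < a i) (hw : ∀ j ∈ t, 0 < w j) (hr : ∀ j ∈ t, ∀ θ, 0 < r j θ)
    (hint : ∀ i ∈ s, ∀ j ∈ t, Integrable (fun θ => p i θ ^ 2 / r j θ) μ)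
    (hpos : ∀ i ∈ s, ∀ j ∈ t, 0 < ∫ θ, p i θ ^ 2 / r j θ ∂μ) :
    ∫ θ, (∑ i ∈ s, a i * p i θ) ^ 2 / ∑ j ∈ t, w j * r j θ ∂μ ≤
      (∑ i ∈ s, a i / √(∑ j ∈ t, w j / ∫ θ, p i θ ^ 2 / r j θ ∂μ)) ^ 2 := by
  set D := fun i j => ∫ θ, p i θ ^ 2 / r j θ ∂μ
  set H := fun i => ∑ j ∈ t, w j / D i j
  set S := ∑ i ∈ s, a i / √(H i)
  have hH : ∀ i ∈ s, 0 < H i := fun i hi =>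
    sum_pos (fun j hj => div_pos (hw j hj) (hpos i hi j hj)) ht
  have hS : 0 < S := sum_pos (fun i hi => div_pos (ha i hi) (Real.sqrt_pos.2 (hH i hi))) hs
  refine (integral_sq_sum_div_sum_le_sum_sum (l := fun i j => w j / D i j / H i)
    (c := fun i => a i / √(H i) / S) hw hr (fun i hi => ?_)
    (fun i hi => div_pos (div_pos (ha i hi) (Real.sqrt_pos.2 (hH i hi))) hS)
    (by rw [← sum_div, div_self hS.ne']) hint).trans_eq ?_
  · rw [← sum_div, div_self (hH i hi).ne']
  rw [sq S, sum_mul]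
  refine sum_congr rfl fun i hi => ?_
  set σ := √(H i)
  have hHσ : H i = σ ^ 2 := (Real.sq_sqrt (hH i hi).le).symm
  have hterm : ∀ j ∈ t, (w j / D i j / H i * a i) ^ 2 / (a i / σ / S * w j) * D i j =
      w j / D i j * (a i * S * σ / H i ^ 2) := fun j hj => by
    have := hw j hj; have := hpos i hi j hj; have := ha i hi
    field_simp
  rw [sum_congr rfl hterm, ← sum_mul]
  change H i * _ = _
  rw [hHσ]
  field_simp

end MixtureDivergence

theorem divergence_mixture_bound_general
    {Θ : Type*} [MeasurableSpace Θ] (μ : Measure Θ)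
    (T : ℤ) (α β : ℕ) (hα : 0 < α) (hβ : 0 < β)
    (ν : ℤ → Θ → ℝ)
    (hνpos : ∀ t θ, 0 < ν t θ)
    (γ ω : ℝ) (hγ : γ ∈ Set.Ioc (0 : ℝ) 1) (hω : ω ∈ Set.Ioc (0 : ℝ) 1)
    (Cγβ Cω : ℝ)
    (hCω : Cω = if ω < 1 then (1 - ω ^ α) / (1 - ω) else (α : ℝ))
    (hd2fin : ∀ i ∈ Finset.range β, ∀ j ∈ Finset.range α,
      Integrable (fun x => (ν (T + 1 + i) x) ^ 2 / ν (T - j) x) μ)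
    (hd2pos : ∀ i ∈ Finset.range β, ∀ j ∈ Finset.range α,
      0 < ∫ x, (ν (T + 1 + i) x) ^ 2 / ν (T - j) x ∂μ) :
    (∫ x, (∑ i ∈ Finset.range β, γ ^ i / Cγβ * ν (T + 1 + i) x) ^ 2 /
        ∑ j ∈ Finset.range α, ω ^ j / Cω * ν (T - j) x ∂μ)
      ≤ (Cω / Cγβ ^ 2) *
        (∑ i ∈ Finset.range β, γ ^ i /
          Real.sqrt (∑ j ∈ Finset.range α,
            ω ^ j / ∫ x, (ν (T + 1 + i) x) ^ 2 / ν (T - j) x ∂μ)) ^ 2 := by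
  have hCω_nonneg : 0 ≤ Cω := by
    rw [hCω]
    split_ifs with hω_lt
    · exact div_nonneg (sub_nonneg.2 (pow_le_one₀ hω.1.le hω.2)) (sub_pos.2 hω_lt).le
    · positivity
  have hnormalise : ∀ x, (∑ i ∈ range β, γ ^ i / Cγβ * ν (T + 1 + i) x) ^ 2 /
        ∑ j ∈ range α, ω ^ j / Cω * ν (T - j) x =
      Cω / Cγβ ^ 2 * ((∑ i ∈ range β, γ ^ i * ν (T + 1 + i) x) ^ 2 /
        ∑ j ∈ range α, ω ^ j * ν (T - j) x) := fun x => by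
    simp only [div_mul_eq_mul_div, ← sum_div, div_pow, div_div_eq_mul_div]
    ring
  simp only [hnormalise, integral_const_mul]
  exact mul_le_mul_of_nonneg_left
    (integral_sq_sum_div_sum_le_sq_sum (nonempty_range_iff.2 hβ.ne')
      (nonempty_range_iff.2 hα.ne') (fun i _ => pow_pos hγ.1 i) (fun j _ => pow_pos hω.1 j)
      (fun j _ => hνpos _) hd2fin hd2pos)
    (by positivity)

/-- Divergence bound between the discounted future mixture and the
exponentially-weighted past mixture. -/
theorem divergence_mixture_bound
    {Θ : Type*} [MeasurableSpace Θ] (μ : Measure Θ)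
    (T : ℤ) (α β : ℕ) (hα : 0 < α) (hβ : 0 < β) (hT : (α : ℤ) ≤ T)
    (ν : ℤ → Θ → ℝ)
    (hνmeas : ∀ t, Measurable (ν t))
    (hνpos : ∀ t θ, 0 < ν t θ)
    (hνint : ∀ t, ∫ θ, ν t θ ∂μ = 1)
    (γ ω : ℝ) (hγ : γ ∈ Set.Ioc (0 : ℝ) 1) (hω : ω ∈ Set.Ioc (0 : ℝ) 1)
    (Cγβ Cω : ℝ)
    (hCγβ : Cγβ = if γ < 1 then (1 - γ ^ β) / (1 - γ) else (β : ℝ))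
    (hCω : Cω = if ω < 1 then (1 - ω ^ α) / (1 - ω) else (α : ℝ))
    (hd2fin : ∀ i ∈ Finset.range β, ∀ j ∈ Finset.range α,
      Integrable (fun x => (ν (T + 1 + i) x) ^ 2 / ν (T - j) x) μ)
    (hd2pos : ∀ i ∈ Finset.range β, ∀ j ∈ Finset.range α,
      0 < ∫ x, (ν (T + 1 + i) x) ^ 2 / ν (T - j) x ∂μ) :
    (∫ x, (∑ i ∈ Finset.range β, γ ^ i / Cγβ * ν (T + 1 + i) x) ^ 2 /
        ∑ j ∈ Finset.range α, ω ^ j / Cω * ν (T - j) x ∂μ)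
      ≤ (Cω / Cγβ ^ 2) *
        (∑ i ∈ Finset.range β, γ ^ i /
          Real.sqrt (∑ j ∈ Finset.range α,
            ω ^ j / ∫ x, (ν (T + 1 + i) x) ^ 2 / ν (T - j) x ∂μ)) ^ 2 :=
  divergence_mixture_bound_general μ T α β hα hβ ν hνpos γ ω hγ hω Cγβ Cω hCω hd2fin hd2pos
end

section
/- Rényi divergence of a mixture against a single distribution (power-mean bound): for α > 1, d_α( Σ_{i=1}^{L} ζ_i p_i ‖ q ) ≤ ( Σ_{i=1}^{L} ζ_i · d_α(p_i ‖ q)^{(α−1)/α} )^{α/(α−1)}. -/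
/-!
Tilting by `q`: with `c = (1 - a) / a` one has `x ^ a * q ^ (1 - a) = (x * q ^ c) ^ a`, so
`d_a(p ‖ q) ^ ((a - 1) / a)` is the `L^a(μ)` norm of `p * q ^ c`, and the mixture turns into the
same mixture of these functions. The bound is then Minkowski's inequality in `L^a(μ)`.
-/

open MeasureTheory Finset

section Minkowski

variable {Θ : Type*} [MeasurableSpace Θ] {μ : Measure Θ}

lemma memLp_ofReal_of_integrable_rpow {a : ℝ} (ha : 0 < a) {f : Θ → ℝ}
    (hf_nonneg : ∀ θ, 0 ≤ f θ) (hf : Integrable (fun θ => f θ ^ a) μ) :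
    MemLp f (ENNReal.ofReal a) μ := by
  have hmeas : AEStronglyMeasurable f μ := by
    have h : f = fun θ => (f θ ^ a) ^ a⁻¹ :=
      funext fun θ => (Real.rpow_rpow_inv (hf_nonneg θ) ha.ne').symm
    rw [h]
    exact (hf.aemeasurable.pow_const a⁻¹).aestronglyMeasurable
  refine (integrable_norm_rpow_iff hmeas (by simpa using ha) ENNReal.ofReal_ne_top).mp ?_
  simpa only [ENNReal.toReal_ofReal ha.le, Real.norm_of_nonneg (hf_nonneg _)] using hf

lemma eLpNorm_ofReal_eq_of_nonneg {a : ℝ} (ha : 0 < a) {f : Θ → ℝ}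
    (hf_nonneg : ∀ θ, 0 ≤ f θ) (hf : MemLp f (ENNReal.ofReal a) μ) :
    eLpNorm f (ENNReal.ofReal a) μ = ENNReal.ofReal ((∫ θ, f θ ^ a ∂μ) ^ (1 / a)) := by
  rw [hf.eLpNorm_eq_integral_rpow_norm (by simpa using ha) ENNReal.ofReal_ne_top,
    ENNReal.toReal_ofReal ha.le, one_div]
  simp only [Real.norm_of_nonneg (hf_nonneg _)]

theorem integral_sum_rpow_one_div_le {ι : Type*} (s : Finset ι) {a : ℝ} (ha : 1 ≤ a)
    {w : ι → ℝ} (hw : ∀ i, 0 ≤ w i) {f : ι → Θ → ℝ} (hf_nonneg : ∀ i θ, 0 ≤ f i θ)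
    (hf : ∀ i, Integrable (fun θ => f i θ ^ a) μ) :
    (∫ θ, (∑ i ∈ s, w i * f i θ) ^ a ∂μ) ^ (1 / a)
      ≤ ∑ i ∈ s, w i * (∫ θ, f i θ ^ a ∂μ) ^ (1 / a) := by
  have ha0 : 0 < a := by linarith
  have hmem : ∀ i, MemLp (f i) (ENNReal.ofReal a) μ := fun i =>
    memLp_ofReal_of_integrable_rpow ha0 (hf_nonneg i) (hf i)
  have hsum_nonneg : ∀ θ, 0 ≤ ∑ i ∈ s, w i * f i θ := fun θ =>
    sum_nonneg fun i _ => mul_nonneg (hw i) (hf_nonneg i θ)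
  have hsum_mem : MemLp (fun θ => ∑ i ∈ s, w i * f i θ) (ENNReal.ofReal a) μ :=
    memLp_finsetSum s fun i _ => (hmem i).const_mul (w i)
  have hterm_nonneg : ∀ i, 0 ≤ w i * (∫ θ, f i θ ^ a ∂μ) ^ (1 / a) := fun i =>
    mul_nonneg (hw i) (Real.rpow_nonneg (integral_nonneg fun θ =>
      Real.rpow_nonneg (hf_nonneg i θ) a) _)
  have triangle : eLpNorm (∑ i ∈ s, w i • f i) (ENNReal.ofReal a) μ
      ≤ ∑ i ∈ s, eLpNorm (w i • f i) (ENNReal.ofReal a) μ :=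
    eLpNorm_sum_le (fun i _ => ((hmem i).const_smul (w i)).aestronglyMeasurable)
      (by simpa using ha)
  have hsum_eq : (∑ i ∈ s, w i • f i) = fun θ => ∑ i ∈ s, w i * f i θ := by
    ext θ
    simp only [Finset.sum_apply, Pi.smul_apply, smul_eq_mul]
  rw [hsum_eq, eLpNorm_ofReal_eq_of_nonneg ha0 hsum_nonneg hsum_mem] at triangle
  simp only [eLpNorm_const_smul, eLpNorm_ofReal_eq_of_nonneg ha0 (hf_nonneg _) (hmem _),
    Real.enorm_eq_ofReal (hw _), ← ENNReal.ofReal_mul (hw _)] at triangle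
  rwa [← ENNReal.ofReal_sum_of_nonneg (fun i _ => hterm_nonneg i),
    ENNReal.ofReal_le_ofReal_iff (sum_nonneg fun i _ => hterm_nonneg i)] at triangle

end Minkowski

lemma rpow_mul_rpow_one_sub_eq {a x y : ℝ} (ha : a ≠ 0) (hx : 0 ≤ x) (hy : 0 ≤ y) :
    x ^ a * y ^ (1 - a) = (x * y ^ ((1 - a) / a)) ^ a := by
  rw [Real.mul_rpow hx (Real.rpow_nonneg hy _), ← Real.rpow_mul hy, div_mul_cancel₀ _ ha]

lemma rpow_one_div_sub_one_eq {a x : ℝ} (ha : 1 < a) (hx : 0 ≤ x) :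
    x ^ (1 / (a - 1)) = (x ^ (1 / a)) ^ (a / (a - 1)) := by
  rw [← Real.rpow_mul hx]
  congr 1
  field_simp [(by linarith : a - 1 ≠ 0), (by linarith : a ≠ 0)]

theorem renyi_mixture_vs_single_general
    {Θ : Type*} [MeasurableSpace Θ] (μ : Measure Θ)
    (L : ℕ)
    (p : Fin L → Θ → ℝ) (q : Θ → ℝ)
    (hpnn : ∀ i θ, 0 ≤ p i θ) (hqpos : ∀ θ, 0 < q θ)
    (ζ : Fin L → ℝ) (hζ : ∀ i, ζ i ∈ Set.Icc (0 : ℝ) 1)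
    (a : ℝ) (ha : 1 < a)
    (hfin : ∀ i, Integrable (fun θ => p i θ ^ a * q θ ^ (1 - a)) μ) :
    (∫ θ, (∑ i, ζ i * p i θ) ^ a * q θ ^ (1 - a) ∂μ) ^ (1 / (a - 1))
      ≤ (∑ i, ζ i *
          ((∫ θ, p i θ ^ a * q θ ^ (1 - a) ∂μ) ^ (1 / (a - 1))) ^ ((a - 1) / a))
        ^ (a / (a - 1)) := by
  have ha0 : a ≠ 0 := by linarith
  have tilt : ∀ θ {x : ℝ}, 0 ≤ x →
      x ^ a * q θ ^ (1 - a) = (x * q θ ^ ((1 - a) / a)) ^ a := fun θ _ hx =>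
    rpow_mul_rpow_one_sub_eq ha0 hx (hqpos θ).le
  have hmix_nonneg : ∀ θ, 0 ≤ ∑ i, ζ i * p i θ := fun θ =>
    sum_nonneg fun i _ => mul_nonneg (hζ i).1 (hpnn i θ)
  have hA : 0 ≤ ∫ θ, (∑ i, ζ i * p i θ) ^ a * q θ ^ (1 - a) ∂μ :=
    integral_nonneg fun θ =>
      mul_nonneg (Real.rpow_nonneg (hmix_nonneg θ) a) (Real.rpow_nonneg (hqpos θ).le _)
  have hB : ∀ i, 0 ≤ ∫ θ, p i θ ^ a * q θ ^ (1 - a) ∂μ := fun i =>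
    integral_nonneg fun θ =>
      mul_nonneg (Real.rpow_nonneg (hpnn i θ) a) (Real.rpow_nonneg (hqpos θ).le _)
  have minkowski := integral_sum_rpow_one_div_le (μ := μ) univ ha.le (fun i => (hζ i).1)
    (f := fun i θ => p i θ * q θ ^ ((1 - a) / a))
    (fun i θ => mul_nonneg (hpnn i θ) (Real.rpow_nonneg (hqpos θ).le _))
    (fun i => by simpa only [tilt _ (hpnn i _)] using hfin i)
  simp only [← mul_assoc, ← sum_mul, ← tilt _ (hpnn _ _), ← tilt _ (hmix_nonneg _)] at minkowski
  rw [rpow_one_div_sub_one_eq ha hA]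
  gcongr
  refine minkowski.trans_eq (sum_congr rfl fun i _ => ?_)
  rw [rpow_one_div_sub_one_eq ha (hB i), ← Real.rpow_mul (Real.rpow_nonneg (hB i) _),
    div_mul_div_cancel₀ (by linarith), div_self (by linarith), Real.rpow_one]

/-- Rényi divergence of a mixture against a single distribution
(power-mean bound). -/
theorem renyi_mixture_vs_single
    {Θ : Type*} [MeasurableSpace Θ] (μ : Measure Θ)
    (L : ℕ) (hL : 0 < L)
    (p : Fin L → Θ → ℝ) (q : Θ → ℝ)
    (hpmeas : ∀ i, Measurable (p i)) (hqmeas : Measurable q)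
    (hpnn : ∀ i θ, 0 ≤ p i θ) (hqpos : ∀ θ, 0 < q θ)
    (hpint : ∀ i, ∫ θ, p i θ ∂μ = 1) (hqint : ∫ θ, q θ ∂μ = 1)
    (ζ : Fin L → ℝ) (hζ : ∀ i, ζ i ∈ Set.Icc (0 : ℝ) 1) (hζsum : ∑ i, ζ i = 1)
    (a : ℝ) (ha : 1 < a)
    (hfin : ∀ i, Integrable (fun θ => p i θ ^ a * q θ ^ (1 - a)) μ) :
    (∫ θ, (∑ i, ζ i * p i θ) ^ a * q θ ^ (1 - a) ∂μ) ^ (1 / (a - 1))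
      ≤ (∑ i, ζ i *
          ((∫ θ, p i θ ^ a * q θ ^ (1 - a) ∂μ) ^ (1 / (a - 1))) ^ ((a - 1) / a))
        ^ (a / (a - 1)) :=
  renyi_mixture_vs_single_general μ L p q hpnn hqpos ζ hζ a ha hfin
end

section
/- Two-steps ψ-first variational bound on the Rényi divergence between mixtures: for α > 1, d_α( Σ_{i=1}^{L} ζ_i p_i ‖ Σ_{j=1}^{K} μ_j q_j ) ≤ ( Σ_{i=1}^{L} ζ_i · ( Σ_{j=1}^{K} μ_j / d_α(p_i ‖ q_j) )^{-(α−1)/α} )^{α/(α−1)}. -/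
open MeasureTheory Finset

/-! Write `M = ∑ j, m j * q j` and `I p = ∫ p ^ a * M ^ (1 - a)`, so the left side is
`I (∑ i, ζ i * p i) ^ (1 / (a - 1))`. Since `p ↦ I p ^ (1 / a)` is the norm of `L^a(M ^ (1 - a) μ)`,
Minkowski's inequality bounds it by `∑ i, ζ i * I (p i) ^ (1 / a)`. For each `i`, put
`A = ∑ j, m j / d_a(p i ‖ q j)`; Radon's inequality (Hölder over the mixture index) gives pointwise
`A ^ a * M ^ (1 - a) ≤ ∑ j, m j * d_a(p i ‖ q j) ^ (-a) * q j ^ (1 - a)`, and integrating against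
`p i ^ a` yields `A ^ a * I (p i) ≤ A`, i.e. `I (p i) ≤ A ^ (1 - a)`. -/

theorem radon_rpow_sum_mul_le {ι : Type*} (s : Finset ι) {a : ℝ} (ha : 1 ≤ a) {m w y : ι → ℝ}
    (hm : ∀ j, 0 ≤ m j) (hw : ∀ j, 0 ≤ w j) (hy : ∀ j, 0 < y j)
    (hmy : 0 < ∑ j ∈ s, m j * y j) :
    (∑ j ∈ s, m j * w j) ^ a * (∑ j ∈ s, m j * y j) ^ (1 - a)
      ≤ ∑ j ∈ s, m j * (w j ^ a * y j ^ (1 - a)) := by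
  have ha0 : a ≠ 0 := (zero_lt_one.trans_le ha).ne'
  set W := ∑ j ∈ s, m j * y j
  set R := ∑ j ∈ s, m j * (w j ^ a * y j ^ (1 - a))
  have holder := Real.inner_le_weight_mul_Lp_of_nonneg s ha (fun j => m j * y j)
    (fun j => w j / y j) (fun j => mul_nonneg (hm j) (hy j).le)
    (fun j => div_nonneg (hw j) (hy j).le)
  have hlhs : ∑ j ∈ s, m j * y j * (w j / y j) = ∑ j ∈ s, m j * w j :=
    sum_congr rfl fun j _ => by field_simp [(hy j).ne']
  have hrhs : ∑ j ∈ s, m j * y j * (w j / y j) ^ a = R :=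
    sum_congr rfl fun j _ => by
      rw [Real.div_rpow (hw j) (hy j).le, Real.rpow_sub (hy j), Real.rpow_one]
      field_simp
  rw [hlhs, hrhs] at holder
  have hR : 0 ≤ R := sum_nonneg fun j _ =>
    mul_nonneg (hm j) (mul_nonneg (Real.rpow_nonneg (hw j) _) (Real.rpow_nonneg (hy j).le _))
  have hpow : (∑ j ∈ s, m j * w j) ^ a ≤ W ^ (a - 1) * R := calc
    (∑ j ∈ s, m j * w j) ^ a ≤ (W ^ (1 - a⁻¹) * R ^ a⁻¹) ^ a :=
      Real.rpow_le_rpow (sum_nonneg fun j _ => mul_nonneg (hm j) (hw j)) holder (by linarith)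
    _ = W ^ (a - 1) * R := by
      rw [Real.mul_rpow (Real.rpow_nonneg hmy.le _) (Real.rpow_nonneg hR _),
        ← Real.rpow_mul hmy.le, ← Real.rpow_mul hR, inv_mul_cancel₀ ha0, Real.rpow_one,
        sub_mul, one_mul, inv_mul_cancel₀ ha0]
  calc (∑ j ∈ s, m j * w j) ^ a * W ^ (1 - a) ≤ W ^ (a - 1) * R * W ^ (1 - a) :=
        mul_le_mul_of_nonneg_right hpow (Real.rpow_nonneg hmy.le _)
    _ = R := by rw [mul_right_comm, ← Real.rpow_add hmy]; simp

theorem integral_finsetSum_rpow_le {α ι : Type*} [MeasurableSpace α] {μ : Measure α}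
    (s : Finset ι) {r : ℝ} (hr : 1 ≤ r) {f : ι → α → ℝ} (hf : ∀ i x, 0 ≤ f i x)
    (hfm : ∀ i, AEStronglyMeasurable (f i) μ) (hfi : ∀ i, Integrable (fun x => f i x ^ r) μ) :
    (∫ x, (∑ i ∈ s, f i x) ^ r ∂μ) ^ r⁻¹ ≤ ∑ i ∈ s, (∫ x, f i x ^ r ∂μ) ^ r⁻¹ := by
  have hr0 : ENNReal.ofReal r ≠ 0 := (ENNReal.ofReal_pos.2 (by linarith)).ne'
  have hLp : ∀ i, MemLp (f i) (ENNReal.ofReal r) μ := fun i => by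
    rw [← integrable_norm_rpow_iff (hfm i) hr0 ENNReal.ofReal_ne_top,
      ENNReal.toReal_ofReal (by linarith)]
    simpa only [Real.norm_of_nonneg (hf i _)] using hfi i
  have hsum : ∀ x, 0 ≤ ∑ i ∈ s, f i x := fun x => sum_nonneg fun i _ => hf i x
  have minkowski := eLpNorm_sum_le (s := s) (fun i _ => hfm i) (ENNReal.one_le_ofReal.2 hr)
  rw [(memLp_finsetSum' s fun i _ => hLp i).eLpNorm_eq_integral_rpow_norm hr0
    ENNReal.ofReal_ne_top] at minkowski
  simp_rw [(hLp _).eLpNorm_eq_integral_rpow_norm hr0 ENNReal.ofReal_ne_top,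
    ENNReal.toReal_ofReal (zero_le_one.trans hr), Finset.sum_apply, Real.norm_of_nonneg (hsum _),
    Real.norm_of_nonneg (hf _ _)] at minkowski
  have hnorm : ∀ i, 0 ≤ (∫ x, f i x ^ r ∂μ) ^ r⁻¹ := fun i =>
    Real.rpow_nonneg (integral_nonneg fun x => Real.rpow_nonneg (hf i x) _) _
  rwa [← ENNReal.ofReal_sum_of_nonneg fun i _ => hnorm i,
    ENNReal.ofReal_le_ofReal_iff (sum_nonneg fun i _ => hnorm i)] at minkowski

section Mixtures

variable {Θ ι : Type*} [MeasurableSpace Θ] {μ : Measure Θ} {a : ℝ}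

noncomputable def hellingerIntegral (μ : Measure Θ) (a : ℝ) (p q : Θ → ℝ) : ℝ :=
  ∫ θ, p θ ^ a * q θ ^ (1 - a) ∂μ

noncomputable def expRenyiDiv (μ : Measure Θ) (a : ℝ) (p q : Θ → ℝ) : ℝ :=
  hellingerIntegral μ a p q ^ (1 / (a - 1))

theorem hellingerIntegral_nonneg {p q : Θ → ℝ} (hp : ∀ θ, 0 ≤ p θ) (hq : ∀ θ, 0 ≤ q θ) :
    0 ≤ hellingerIntegral μ a p q :=
  integral_nonneg fun θ => mul_nonneg (Real.rpow_nonneg (hp θ) _) (Real.rpow_nonneg (hq θ) _)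

theorem hellingerIntegral_mixture_left_rpow_le (s : Finset ι) (ha : 1 ≤ a)
    {p : ι → Θ → ℝ} {q : Θ → ℝ} {ζ : ι → ℝ} (hp : ∀ i θ, 0 ≤ p i θ)
    (hpm : ∀ i, Measurable (p i)) (hq : ∀ θ, 0 ≤ q θ) (hqm : Measurable q) (hζ : ∀ i, 0 ≤ ζ i)
    (hint : ∀ i, Integrable (fun θ => p i θ ^ a * q θ ^ (1 - a)) μ) :
    hellingerIntegral μ a (fun θ => ∑ i ∈ s, ζ i * p i θ) q ^ a⁻¹
      ≤ ∑ i ∈ s, ζ i * hellingerIntegral μ a (p i) q ^ a⁻¹ := by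
  have ha0 : a ≠ 0 := (zero_lt_one.trans_le ha).ne'
  set f : ι → Θ → ℝ := fun i θ => ζ i * p i θ * q θ ^ ((1 - a) / a)
  have hqa : ∀ θ, (q θ ^ ((1 - a) / a)) ^ a = q θ ^ (1 - a) := fun θ => by
    rw [← Real.rpow_mul (hq θ), div_mul_cancel₀ _ ha0]
  have hf0 : ∀ i θ, 0 ≤ f i θ := fun i θ =>
    mul_nonneg (mul_nonneg (hζ i) (hp i θ)) (Real.rpow_nonneg (hq θ) _)
  have hfa : ∀ i θ, f i θ ^ a = ζ i ^ a * (p i θ ^ a * q θ ^ (1 - a)) := fun i θ => by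
    rw [Real.mul_rpow (mul_nonneg (hζ i) (hp i θ)) (Real.rpow_nonneg (hq θ) _),
      Real.mul_rpow (hζ i) (hp i θ), hqa, mul_assoc]
  have hsum : ∀ θ, (∑ i ∈ s, f i θ) ^ a = (∑ i ∈ s, ζ i * p i θ) ^ a * q θ ^ (1 - a) :=
    fun θ => by
      rw [← sum_mul, Real.mul_rpow (sum_nonneg fun i _ => mul_nonneg (hζ i) (hp i θ))
        (Real.rpow_nonneg (hq θ) _), hqa]
  have minkowski := integral_finsetSum_rpow_le s ha hf0
    (fun i => (((hpm i).const_mul (ζ i)).mul (hqm.pow_const _)).aestronglyMeasurable)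
    (fun i => by simpa only [hfa] using (hint i).const_mul _)
  simp_rw [hsum, hfa, integral_const_mul] at minkowski
  refine minkowski.trans_eq (sum_congr rfl fun i _ => ?_)
  change (ζ i ^ a * hellingerIntegral μ a (p i) q) ^ a⁻¹ = _
  rw [Real.mul_rpow (Real.rpow_nonneg (hζ i) _) (hellingerIntegral_nonneg (hp i) hq),
    ← Real.rpow_mul (hζ i), mul_inv_cancel₀ ha0, Real.rpow_one]

theorem integrable_rpow_mul_mixture_rpow [Fintype ι] (ha : 1 ≤ a) {p : Θ → ℝ}
    {q : ι → Θ → ℝ} {m : ι → ℝ} (hp : ∀ θ, 0 ≤ p θ) (hpm : Measurable p)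
    (hq : ∀ j θ, 0 < q j θ) (hqm : ∀ j, Measurable (q j)) (hm : ∀ j, 0 ≤ m j) {j₀ : ι}
    (hj₀ : 0 < m j₀) (hint : Integrable (fun θ => p θ ^ a * q j₀ θ ^ (1 - a)) μ) :
    Integrable (fun θ => p θ ^ a * (∑ j, m j * q j θ) ^ (1 - a)) μ := by
  refine (hint.const_mul (m j₀ ^ (1 - a))).mono' (by fun_prop) (ae_of_all _ fun θ => ?_)
  have hle : m j₀ * q j₀ θ ≤ ∑ j, m j * q j θ :=
    single_le_sum (fun j _ => mul_nonneg (hm j) (hq j θ).le) (mem_univ j₀)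
  have hpos : 0 < m j₀ * q j₀ θ := mul_pos hj₀ (hq j₀ θ)
  rw [Real.norm_of_nonneg (mul_nonneg (Real.rpow_nonneg (hp θ) _)
    (Real.rpow_nonneg (hpos.trans_le hle).le _))]
  calc p θ ^ a * (∑ j, m j * q j θ) ^ (1 - a)
      ≤ p θ ^ a * (m j₀ * q j₀ θ) ^ (1 - a) :=
        mul_le_mul_of_nonneg_left (Real.rpow_le_rpow_of_nonpos hpos hle (by linarith))
          (Real.rpow_nonneg (hp θ) _)
    _ = m j₀ ^ (1 - a) * (p θ ^ a * q j₀ θ ^ (1 - a)) := by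
        rw [Real.mul_rpow hj₀.le (hq j₀ θ).le]; ring

theorem hellingerIntegral_mixture_right_le [Fintype ι] (ha : 1 < a) {p : Θ → ℝ}
    {q : ι → Θ → ℝ} {m : ι → ℝ} (hp : ∀ θ, 0 ≤ p θ) (hq : ∀ j θ, 0 < q j θ)
    (hm : ∀ j, 0 ≤ m j) (hm₀ : ∃ j, 0 < m j)
    (hint : ∀ j, Integrable (fun θ => p θ ^ a * q j θ ^ (1 - a)) μ)
    (hpos : ∀ j, 0 < hellingerIntegral μ a p (q j)) :
    hellingerIntegral μ a p (fun θ => ∑ j, m j * q j θ)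
      ≤ (∑ j, m j / expRenyiDiv μ a p (q j)) ^ (1 - a) := by
  obtain ⟨j₀, hj₀⟩ := hm₀
  set d : ι → ℝ := fun j => expRenyiDiv μ a p (q j)
  set A := ∑ j, m j / d j
  set M : Θ → ℝ := fun θ => ∑ j, m j * q j θ
  have hd : ∀ j, 0 < d j := fun j => Real.rpow_pos_of_pos (hpos j) _
  have hc : ∀ j, hellingerIntegral μ a p (q j) = d j ^ (a - 1) := fun j => by
    change _ = (hellingerIntegral μ a p (q j) ^ (1 / (a - 1))) ^ (a - 1)
    rw [← Real.rpow_mul (hpos j).le, one_div_mul_cancel (by linarith), Real.rpow_one]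
  have hA : 0 < A := sum_pos' (fun j _ => div_nonneg (hm j) (hd j).le)
    ⟨j₀, mem_univ _, div_pos hj₀ (hd j₀)⟩
  have hM : ∀ θ, 0 < M θ := fun θ => sum_pos' (fun j _ => mul_nonneg (hm j) (hq j θ).le)
    ⟨j₀, mem_univ _, mul_pos hj₀ (hq j₀ θ)⟩
  have hpoint : ∀ θ, A ^ a * (p θ ^ a * M θ ^ (1 - a))
      ≤ ∑ j, m j * (d j)⁻¹ ^ a * (p θ ^ a * q j θ ^ (1 - a)) := fun θ => by
    have radon := radon_rpow_sum_mul_le univ ha.le hm (w := fun j => (d j)⁻¹)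
      (fun j => inv_nonneg.2 (hd j).le) (hq · θ) (hM θ)
    simp only [← div_eq_mul_inv] at radon
    calc A ^ a * (p θ ^ a * M θ ^ (1 - a)) = p θ ^ a * (A ^ a * M θ ^ (1 - a)) := by ring
      _ ≤ p θ ^ a * ∑ j, m j * ((d j)⁻¹ ^ a * q j θ ^ (1 - a)) :=
        mul_le_mul_of_nonneg_left radon (Real.rpow_nonneg (hp θ) _)
      _ = _ := by rw [mul_sum]; exact sum_congr rfl fun j _ => by ring
  have hI : A ^ a * hellingerIntegral μ a p M ≤ A := calc
    A ^ a * hellingerIntegral μ a p M = ∫ θ, A ^ a * (p θ ^ a * M θ ^ (1 - a)) ∂μ :=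
      (integral_const_mul _ _).symm
    _ ≤ ∫ θ, ∑ j, m j * (d j)⁻¹ ^ a * (p θ ^ a * q j θ ^ (1 - a)) ∂μ :=
      integral_mono_of_nonneg (ae_of_all _ fun θ => mul_nonneg (Real.rpow_nonneg hA.le _)
          (mul_nonneg (Real.rpow_nonneg (hp θ) _) (Real.rpow_nonneg (hM θ).le _)))
        (integrable_finsetSum _ fun j _ => (hint j).const_mul _) (ae_of_all _ hpoint)
    _ = ∑ j, m j * (d j)⁻¹ ^ a * d j ^ (a - 1) := by
      rw [integral_finsetSum _ fun j _ => (hint j).const_mul _]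
      exact sum_congr rfl fun j _ => by rw [integral_const_mul, ← hc]; rfl
    _ = A := sum_congr rfl fun j _ => by
      rw [Real.inv_rpow (hd j).le, Real.rpow_sub (hd j), Real.rpow_one]
      field_simp [(Real.rpow_pos_of_pos (hd j) a).ne']
  rw [Real.rpow_sub hA, Real.rpow_one, le_div_iff₀ (Real.rpow_pos_of_pos hA a), mul_comm]
  exact hI

theorem expRenyiDiv_mixture_le [Fintype ι] {κ : Type*} [Fintype κ] (ha : 1 < a)
    {p : ι → Θ → ℝ} {q : κ → Θ → ℝ} {ζ : ι → ℝ} {m : κ → ℝ}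
    (hp : ∀ i θ, 0 ≤ p i θ) (hpm : ∀ i, Measurable (p i))
    (hq : ∀ j θ, 0 < q j θ) (hqm : ∀ j, Measurable (q j))
    (hζ : ∀ i, 0 ≤ ζ i) (hm : ∀ j, 0 ≤ m j) (hm₀ : ∃ j, 0 < m j)
    (hint : ∀ i j, Integrable (fun θ => p i θ ^ a * q j θ ^ (1 - a)) μ)
    (hpos : ∀ i j, 0 < hellingerIntegral μ a (p i) (q j)) :
    expRenyiDiv μ a (fun θ => ∑ i, ζ i * p i θ) (fun θ => ∑ j, m j * q j θ)
      ≤ (∑ i, ζ i * (∑ j, m j / expRenyiDiv μ a (p i) (q j)) ^ (-((a - 1) / a)))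
          ^ (a / (a - 1)) := by
  obtain ⟨j₀, hj₀⟩ := hm₀
  set M : Θ → ℝ := fun θ => ∑ j, m j * q j θ
  have hM : ∀ θ, 0 ≤ M θ := fun θ => sum_nonneg fun j _ => mul_nonneg (hm j) (hq j θ).le
  have hstepA : ∀ i, hellingerIntegral μ a (p i) M ^ a⁻¹
      ≤ (∑ j, m j / expRenyiDiv μ a (p i) (q j)) ^ (-((a - 1) / a)) := fun i => by
    have hA : 0 ≤ ∑ j, m j / expRenyiDiv μ a (p i) (q j) := sum_nonneg fun j _ =>
      div_nonneg (hm j) (Real.rpow_nonneg (hpos i j).le _)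
    calc hellingerIntegral μ a (p i) M ^ a⁻¹
        ≤ ((∑ j, m j / expRenyiDiv μ a (p i) (q j)) ^ (1 - a)) ^ a⁻¹ :=
          Real.rpow_le_rpow (hellingerIntegral_nonneg (hp i) hM)
            (hellingerIntegral_mixture_right_le ha (hp i) hq hm ⟨j₀, hj₀⟩ (hint i) (hpos i))
            (by positivity)
      _ = _ := by rw [← Real.rpow_mul hA]; ring_nf
  have hstepB := hellingerIntegral_mixture_left_rpow_le univ ha.le hp hpm hM (by fun_prop) hζ
    fun i => integrable_rpow_mul_mixture_rpow ha.le (hp i) (hpm i) hq hqm hm hj₀ (hint i j₀)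
  have hJ : 0 ≤ hellingerIntegral μ a (fun θ => ∑ i, ζ i * p i θ) M :=
    hellingerIntegral_nonneg (fun θ => sum_nonneg fun i _ => mul_nonneg (hζ i) (hp i θ)) hM
  calc expRenyiDiv μ a (fun θ => ∑ i, ζ i * p i θ) M
      = (hellingerIntegral μ a (fun θ => ∑ i, ζ i * p i θ) M ^ a⁻¹) ^ (a / (a - 1)) := by
        rw [expRenyiDiv, ← Real.rpow_mul hJ]; field_simp
    _ ≤ _ := Real.rpow_le_rpow (Real.rpow_nonneg hJ _)
        (hstepB.trans (sum_le_sum fun i _ => mul_le_mul_of_nonneg_left (hstepA i) (hζ i)))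
        (div_nonneg (by linarith) (by linarith))

end Mixtures

theorem renyi_mixtures_two_steps_psi_first_general
    {Θ : Type*} [MeasurableSpace Θ] (μ : Measure Θ)
    (L K : ℕ)
    (p : Fin L → Θ → ℝ) (q : Fin K → Θ → ℝ)
    (hpmeas : ∀ i, Measurable (p i)) (hqmeas : ∀ j, Measurable (q j))
    (hpnn : ∀ i θ, 0 ≤ p i θ) (hqpos : ∀ j θ, 0 < q j θ)
    (ζ : Fin L → ℝ) (hζ : ∀ i, ζ i ∈ Set.Icc (0 : ℝ) 1)
    (mw : Fin K → ℝ) (hmw : ∀ j, mw j ∈ Set.Icc (0 : ℝ) 1)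
    (hmwsum : ∑ j, mw j = 1)
    (a : ℝ) (ha : 1 < a)
    (hfin : ∀ i j, Integrable (fun θ => p i θ ^ a * q j θ ^ (1 - a)) μ)
    (hpos : ∀ i j, 0 < ∫ θ, p i θ ^ a * q j θ ^ (1 - a) ∂μ) :
    (∫ θ, (∑ i, ζ i * p i θ) ^ a * (∑ j, mw j * q j θ) ^ (1 - a) ∂μ)
        ^ (1 / (a - 1))
      ≤ (∑ i, ζ i *
          (∑ j, mw j /
            (∫ θ, p i θ ^ a * q j θ ^ (1 - a) ∂μ) ^ (1 / (a - 1)))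
            ^ (-((a - 1) / a)))
        ^ (a / (a - 1)) := by
  have hmw₀ : ∃ j, 0 < mw j := by
    by_contra! h
    linarith [sum_nonpos fun j (_ : j ∈ univ) => h j]
  exact expRenyiDiv_mixture_le ha hpnn hpmeas hqpos hqmeas (fun i => (hζ i).1)
    (fun j => (hmw j).1) hmw₀ hfin hpos

/-- Two-steps ψ-first variational bound on the Rényi divergence between
mixtures. -/
theorem renyi_mixtures_two_steps_psi_first
    {Θ : Type*} [MeasurableSpace Θ] (μ : Measure Θ)
    (L K : ℕ) (hL : 0 < L) (hK : 0 < K)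
    (p : Fin L → Θ → ℝ) (q : Fin K → Θ → ℝ)
    (hpmeas : ∀ i, Measurable (p i)) (hqmeas : ∀ j, Measurable (q j))
    (hpnn : ∀ i θ, 0 ≤ p i θ) (hqpos : ∀ j θ, 0 < q j θ)
    (hpint : ∀ i, ∫ θ, p i θ ∂μ = 1) (hqint : ∀ j, ∫ θ, q j θ ∂μ = 1)
    (ζ : Fin L → ℝ) (hζ : ∀ i, ζ i ∈ Set.Icc (0 : ℝ) 1) (hζsum : ∑ i, ζ i = 1)
    (mw : Fin K → ℝ) (hmw : ∀ j, mw j ∈ Set.Icc (0 : ℝ) 1)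
    (hmwsum : ∑ j, mw j = 1)
    (a : ℝ) (ha : 1 < a)
    (hfin : ∀ i j, Integrable (fun θ => p i θ ^ a * q j θ ^ (1 - a)) μ)
    (hpos : ∀ i j, 0 < ∫ θ, p i θ ^ a * q j θ ^ (1 - a) ∂μ) :
    (∫ θ, (∑ i, ζ i * p i θ) ^ a * (∑ j, mw j * q j θ) ^ (1 - a) ∂μ)
        ^ (1 / (a - 1))
      ≤ (∑ i, ζ i *
          (∑ j, mw j /
            (∫ θ, p i θ ^ a * q j θ ^ (1 - a) ∂μ) ^ (1 / (a - 1)))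
            ^ (-((a - 1) / a)))
        ^ (a / (a - 1)) :=
  renyi_mixtures_two_steps_psi_first_general μ L K p q hpmeas hqmeas hpnn hqpos ζ hζ mw hmw hmwsum a
    ha hfin hpos
end

section
/- Two-steps φ-first variational bound on the Rényi divergence between mixtures: for α > 1, d_α( Σ_{i=1}^{L} ζ_i p_i ‖ Σ_{j=1}^{K} μ_j q_j ) ≤ 1 / ( Σ_{j=1}^{K} μ_j · ( Σ_{i=1}^{L} ζ_i · d_α(p_i ‖ q_j)^{(α−1)/α} )^{-α/(α−1)} ). -/
/-!
For `a ≥ 1` the map `(x, y) ↦ x ^ a * y ^ (1 - a)` is the perspective of the convex function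
`t ↦ t ^ a`, hence subadditive, with equality when `x` and `y` are proportional. Splitting the
mixture `∑ j, w j * q j` along weights `u j`, and then each `q j` along weights `v i j` matched
with the summands of `∑ i, ζ i * p i`, bounds the integrand pointwise; after integration,
with `A i j = ∫ p i ^ a * q j ^ (1 - a)`, the bound reads
`∑ j, u j ^ a * w j ^ (1 - a) * ∑ i, v i j ^ (1 - a) * ζ i ^ a * A i j`.
Choosing `v i j ∝ ζ i * A i j ^ (1 / a)` and then `u j ∝ w j * B j ^ (-(a / (a - 1)))`,
where `B j = ∑ i, ζ i * A i j ^ (1 / a)`, makes both splittings equality cases, and the bound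
collapses to `Z ^ (1 - a)` with `Z = ∑ j, w j * B j ^ (-(a / (a - 1)))`.
-/

open MeasureTheory Finset

theorem rpow_sum_mul_rpow_one_sub_sum_le {ι : Type*} (s : Finset ι) {a : ℝ} (ha : 1 ≤ a)
    {x y : ι → ℝ} (hx : ∀ i ∈ s, 0 ≤ x i) (hy : ∀ i ∈ s, 0 ≤ y i)
    (hxy : ∀ i ∈ s, y i = 0 → x i = 0) :
    (∑ i ∈ s, x i) ^ a * (∑ i ∈ s, y i) ^ (1 - a) ≤ ∑ i ∈ s, x i ^ a * y i ^ (1 - a) := by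
  set X := ∑ i ∈ s, x i
  set Y := ∑ i ∈ s, y i
  have ha0 : a ≠ 0 := by positivity
  rcases (sum_nonneg hy).eq_or_lt with hY | hY
  · have hX : X = 0 :=
      sum_eq_zero fun i hi => hxy i hi ((sum_eq_zero_iff_of_nonneg hy).1 hY.symm i hi)
    rw [hX, Real.zero_rpow ha0, zero_mul]
    exact sum_nonneg fun i hi => by have := hx i hi; have := hy i hi; positivity
  have hmean : ∑ i ∈ s, y i / Y * (x i / y i) = X / Y := by
    rw [sum_div]
    refine sum_congr rfl fun i hi => ?_
    rcases (hy i hi).eq_or_lt with h | h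
    · simp [← h, hxy i hi h.symm]
    · field_simp
  have hpow : ∀ i ∈ s, y i / Y * (x i / y i) ^ a = x i ^ a * y i ^ (1 - a) / Y := by
    intro i hi
    rcases (hy i hi).eq_or_lt with h | h
    · simp [← h, hxy i hi h.symm, Real.zero_rpow ha0]
    · rw [Real.div_rpow (hx i hi) h.le, Real.rpow_sub h, Real.rpow_one]
      field_simp
  have jensen := Real.rpow_arith_mean_le_arith_mean_rpow s (fun i => y i / Y) (fun i => x i / y i)
    (fun i hi => div_nonneg (hy i hi) hY.le) (by rw [← sum_div, div_self hY.ne'])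
    (fun i hi => div_nonneg (hx i hi) (hy i hi)) ha
  rw [hmean, sum_congr rfl hpow, ← sum_div, Real.div_rpow (sum_nonneg hx) hY.le] at jensen
  calc X ^ a * Y ^ (1 - a) = X ^ a / Y ^ a * Y := by
        rw [Real.rpow_sub hY, Real.rpow_one]; ring
    _ ≤ (∑ i ∈ s, x i ^ a * y i ^ (1 - a)) / Y * Y := by gcongr
    _ = ∑ i ∈ s, x i ^ a * y i ^ (1 - a) := div_mul_cancel₀ _ hY.ne'

theorem sum_div_sum_rpow_mul_rpow_one_sub {ι : Type*} (s : Finset ι) {c : ι → ℝ}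
    (hc : ∀ i ∈ s, 0 ≤ c i) (hS : 0 < ∑ i ∈ s, c i) (r : ℝ) :
    ∑ i ∈ s, (c i / ∑ j ∈ s, c j) ^ r * c i ^ (1 - r) = (∑ i ∈ s, c i) ^ (1 - r) := by
  set S := ∑ i ∈ s, c i
  have hterm : ∀ i ∈ s, (c i / S) ^ r * c i ^ (1 - r) = S ^ (-r) * c i := by
    intro i hi
    rw [Real.div_rpow (hc i hi) hS.le, Real.rpow_neg hS.le, div_eq_mul_inv, mul_right_comm,
      ← Real.rpow_add' (hc i hi) (by norm_num), add_sub_cancel, Real.rpow_one, mul_comm]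
  rw [sum_congr rfl hterm, ← mul_sum, ← Real.rpow_add_one hS.ne', neg_add_eq_sub]

section Mixture

variable {ι κ : Type*} [Fintype ι] [Fintype κ] {a : ℝ} {ζ : ι → ℝ} {w : κ → ℝ}
  {u : κ → ℝ} {v : ι → κ → ℝ}

theorem mixture_rpow_mul_rpow_le (ha : 1 ≤ a) {p : ι → ℝ} {q : κ → ℝ}
    (hζ : ∀ i, 0 ≤ ζ i) (hp : ∀ i, 0 ≤ p i) (hw : ∀ j, 0 ≤ w j) (hq : ∀ j, 0 < q j)
    (hu : ∀ j, 0 ≤ u j) (hu_sum : ∑ j, u j = 1) (hwu : ∀ j, w j = 0 → u j = 0)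
    (hv : ∀ i j, 0 ≤ v i j) (hv_sum : ∀ j, ∑ i, v i j = 1) (hvζ : ∀ i j, v i j = 0 → ζ i = 0) :
    (∑ i, ζ i * p i) ^ a * (∑ j, w j * q j) ^ (1 - a) ≤
      ∑ j, u j ^ a * w j ^ (1 - a) * ∑ i, v i j ^ (1 - a) * ζ i ^ a * (p i ^ a * q j ^ (1 - a)) := by
  set P := ∑ i, ζ i * p i
  have hP : 0 ≤ P := sum_nonneg fun i _ => mul_nonneg (hζ i) (hp i)
  have split_q : P ^ a * (∑ j, w j * q j) ^ (1 - a) ≤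
      ∑ j, u j ^ a * w j ^ (1 - a) * (P ^ a * q j ^ (1 - a)) := by
    have h := rpow_sum_mul_rpow_one_sub_sum_le univ ha (x := fun j => u j * P)
      (y := fun j => w j * q j) (fun j _ => mul_nonneg (hu j) hP)
      (fun j _ => mul_nonneg (hw j) (hq j).le)
      (fun j _ h => by rw [hwu j ((mul_eq_zero.1 h).resolve_right (hq j).ne'), zero_mul])
    simp only [← sum_mul, hu_sum, one_mul] at h
    refine h.trans_eq (sum_congr rfl fun j _ => ?_)
    rw [Real.mul_rpow (hu j) hP, Real.mul_rpow (hw j) (hq j).le]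
    ring
  have split_p : ∀ j, P ^ a * q j ^ (1 - a) ≤ ∑ i, (ζ i * p i) ^ a * (v i j * q j) ^ (1 - a) := by
    intro j
    have h := rpow_sum_mul_rpow_one_sub_sum_le univ ha (x := fun i => ζ i * p i)
      (y := fun i => v i j * q j) (fun i _ => mul_nonneg (hζ i) (hp i))
      (fun i _ => mul_nonneg (hv i j) (hq j).le)
      (fun i _ h => by rw [hvζ i j ((mul_eq_zero.1 h).resolve_right (hq j).ne'), zero_mul])
    simpa only [← sum_mul, hv_sum, one_mul] using h
  calc P ^ a * (∑ j, w j * q j) ^ (1 - a)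
      ≤ ∑ j, u j ^ a * w j ^ (1 - a) * (P ^ a * q j ^ (1 - a)) := split_q
    _ ≤ ∑ j, u j ^ a * w j ^ (1 - a) * ∑ i, (ζ i * p i) ^ a * (v i j * q j) ^ (1 - a) := by
      gcongr with j
      · exact mul_nonneg (Real.rpow_nonneg (hu j) _) (Real.rpow_nonneg (hw j) _)
      · exact split_p j
    _ = _ := by
      refine sum_congr rfl fun j _ => congrArg _ (sum_congr rfl fun i _ => ?_)
      rw [Real.mul_rpow (hζ i) (hp i), Real.mul_rpow (hv i j) (hq j).le]
      ring

theorem integral_mixture_rpow_mul_rpow_le {Θ : Type*} [MeasurableSpace Θ] (μ : Measure Θ)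
    (ha : 1 ≤ a) {p : ι → Θ → ℝ} {q : κ → Θ → ℝ}
    (hζ : ∀ i, 0 ≤ ζ i) (hp : ∀ i θ, 0 ≤ p i θ) (hw : ∀ j, 0 ≤ w j) (hq : ∀ j θ, 0 < q j θ)
    (hu : ∀ j, 0 ≤ u j) (hu_sum : ∑ j, u j = 1) (hwu : ∀ j, w j = 0 → u j = 0)
    (hv : ∀ i j, 0 ≤ v i j) (hv_sum : ∀ j, ∑ i, v i j = 1) (hvζ : ∀ i j, v i j = 0 → ζ i = 0)
    (hint : ∀ i j, Integrable (fun θ => p i θ ^ a * q j θ ^ (1 - a)) μ) :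
    ∫ θ, (∑ i, ζ i * p i θ) ^ a * (∑ j, w j * q j θ) ^ (1 - a) ∂μ ≤
      ∑ j, u j ^ a * w j ^ (1 - a) *
        ∑ i, v i j ^ (1 - a) * ζ i ^ a * ∫ θ, p i θ ^ a * q j θ ^ (1 - a) ∂μ := by
  have hint_inner : ∀ j, Integrable
      (fun θ => ∑ i, v i j ^ (1 - a) * ζ i ^ a * (p i θ ^ a * q j θ ^ (1 - a))) μ :=
    fun j => integrable_finsetSum _ fun i _ => (hint i j).const_mul _
  calc _ ≤ ∫ θ, ∑ j, u j ^ a * w j ^ (1 - a) *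
          ∑ i, v i j ^ (1 - a) * ζ i ^ a * (p i θ ^ a * q j θ ^ (1 - a)) ∂μ := by
        refine integral_mono_of_nonneg (Filter.Eventually.of_forall fun θ => ?_)
          (integrable_finsetSum _ fun j _ => (hint_inner j).const_mul _)
          (Filter.Eventually.of_forall fun θ => mixture_rpow_mul_rpow_le ha hζ (hp · θ) hw
            (hq · θ) hu hu_sum hwu hv hv_sum hvζ)
        exact mul_nonneg (Real.rpow_nonneg (sum_nonneg fun i _ => mul_nonneg (hζ i) (hp i θ)) a)
          (Real.rpow_nonneg (sum_nonneg fun j _ => mul_nonneg (hw j) (hq j θ).le) (1 - a))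
    _ = _ := by
        rw [integral_finsetSum _ fun j _ => (hint_inner j).const_mul _]
        refine sum_congr rfl fun j _ => ?_
        rw [integral_const_mul, integral_finsetSum _ fun i _ => (hint i j).const_mul _]
        simp only [integral_const_mul]

end Mixture

theorem integral_mixture_rpow_mul_rpow_le_rpow_one_sub {Θ ι κ : Type*} [Fintype ι] [Fintype κ]
    [MeasurableSpace Θ] (μ : Measure Θ) {a : ℝ} (ha : 1 < a) {ζ : ι → ℝ} {w : κ → ℝ}
    {p : ι → Θ → ℝ} {q : κ → Θ → ℝ} (hζ : ∀ i, 0 ≤ ζ i) (hζ₀ : ζ ≠ 0) (hw : ∀ j, 0 ≤ w j)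
    (hw₀ : w ≠ 0) (hp : ∀ i θ, 0 ≤ p i θ) (hq : ∀ j θ, 0 < q j θ)
    (hint : ∀ i j, Integrable (fun θ => p i θ ^ a * q j θ ^ (1 - a)) μ)
    (hpos : ∀ i j, 0 < ∫ θ, p i θ ^ a * q j θ ^ (1 - a) ∂μ) :
    ∫ θ, (∑ i, ζ i * p i θ) ^ a * (∑ j, w j * q j θ) ^ (1 - a) ∂μ ≤
      (∑ j, w j * (∑ i, ζ i * (∫ θ, p i θ ^ a * q j θ ^ (1 - a) ∂μ) ^ (1 / a))
        ^ (-(a / (a - 1)))) ^ (1 - a) := by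
  have ha₁ : a - 1 ≠ 0 := (sub_pos.2 ha).ne'
  set A : ι → κ → ℝ := fun i j => ∫ θ, p i θ ^ a * q j θ ^ (1 - a) ∂μ
  set c : ι → κ → ℝ := fun i j => ζ i * A i j ^ (1 / a)
  set B : κ → ℝ := fun j => ∑ i, c i j
  set d : κ → ℝ := fun j => w j * B j ^ (-(a / (a - 1)))
  change _ ≤ (∑ j, d j) ^ (1 - a)
  set Z := ∑ j, d j
  obtain ⟨i₀, hi₀⟩ := Function.ne_iff.1 hζ₀
  obtain ⟨j₀, hj₀⟩ := Function.ne_iff.1 hw₀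
  have hc : ∀ i j, 0 ≤ c i j := fun i j => mul_nonneg (hζ i) (Real.rpow_nonneg (hpos i j).le _)
  have hB : ∀ j, 0 < B j := fun j => sum_pos' (fun i _ => hc i j) ⟨i₀, mem_univ _,
    mul_pos ((hζ i₀).lt_of_ne' hi₀) (Real.rpow_pos_of_pos (hpos i₀ j) _)⟩
  have hd : ∀ j, 0 ≤ d j := fun j => mul_nonneg (hw j) (Real.rpow_nonneg (hB j).le _)
  have hZ : 0 < Z := sum_pos' (fun j _ => hd j) ⟨j₀, mem_univ _,
    mul_pos ((hw j₀).lt_of_ne' hj₀) (Real.rpow_pos_of_pos (hB j₀) _)⟩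
  have inner : ∀ j, ∑ i, (c i j / B j) ^ (1 - a) * ζ i ^ a * A i j = B j ^ a := fun j => by
    convert sum_div_sum_rpow_mul_rpow_one_sub univ (fun i _ => hc i j) (hB j) (1 - a)
      using 2 with i
    · rw [sub_sub_cancel, mul_assoc, Real.mul_rpow (hζ i) (Real.rpow_nonneg (hpos i j).le _),
        ← Real.rpow_mul (hpos i j).le, one_div_mul_cancel (by positivity), Real.rpow_one]
    · rw [sub_sub_cancel]
  have outer : ∑ j, (d j / Z) ^ a * w j ^ (1 - a) * B j ^ a = Z ^ (1 - a) := by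
    convert sum_div_sum_rpow_mul_rpow_one_sub univ (fun j _ => hd j) hZ a using 2 with j
    rw [mul_assoc, Real.mul_rpow (hw j) (Real.rpow_nonneg (hB j).le _),
      ← Real.rpow_mul (hB j).le, show -(a / (a - 1)) * (1 - a) = a by field_simp; ring]
  refine (integral_mixture_rpow_mul_rpow_le μ ha.le (u := fun j => d j / Z)
    (v := fun i j => c i j / B j) hζ hp hw hq (fun j => div_nonneg (hd j) hZ.le)
    (by rw [← sum_div, div_self hZ.ne']) (fun j h => by simp [d, h])
    (fun i j => div_nonneg (hc i j) (hB j).le) (fun j => by rw [← sum_div, div_self (hB j).ne'])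
    (fun i j h => (mul_eq_zero.1 ((div_eq_zero_iff.1 h).resolve_right (hB j).ne')).resolve_right
      (Real.rpow_pos_of_pos (hpos i j) _).ne') hint).trans_eq ?_
  rw [← outer]
  exact sum_congr rfl fun j _ => congrArg _ (inner j)

theorem renyi_mixtures_two_steps_phi_first_general
    {Θ : Type*} [MeasurableSpace Θ] (μ : Measure Θ)
    (L K : ℕ)
    (p : Fin L → Θ → ℝ) (q : Fin K → Θ → ℝ)
    (hpnn : ∀ i θ, 0 ≤ p i θ) (hqpos : ∀ j θ, 0 < q j θ)
    (ζ : Fin L → ℝ) (hζ : ∀ i, ζ i ∈ Set.Icc (0 : ℝ) 1) (hζsum : ∑ i, ζ i = 1)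
    (mw : Fin K → ℝ) (hmw : ∀ j, mw j ∈ Set.Icc (0 : ℝ) 1)
    (hmwsum : ∑ j, mw j = 1)
    (a : ℝ) (ha : 1 < a)
    (hfin : ∀ i j, Integrable (fun θ => p i θ ^ a * q j θ ^ (1 - a)) μ)
    (hpos : ∀ i j, 0 < ∫ θ, p i θ ^ a * q j θ ^ (1 - a) ∂μ) :
    (∫ θ, (∑ i, ζ i * p i θ) ^ a * (∑ j, mw j * q j θ) ^ (1 - a) ∂μ)
        ^ (1 / (a - 1))
      ≤ 1 / (∑ j, mw j *
          (∑ i, ζ i *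
            ((∫ θ, p i θ ^ a * q j θ ^ (1 - a) ∂μ) ^ (1 / (a - 1)))
              ^ ((a - 1) / a))
            ^ (-(a / (a - 1)))) := by
  have ha₁ : a - 1 ≠ 0 := (sub_pos.2 ha).ne'
  have hrpow : ∀ i j, ((∫ θ, p i θ ^ a * q j θ ^ (1 - a) ∂μ) ^ (1 / (a - 1))) ^ ((a - 1) / a) =
      (∫ θ, p i θ ^ a * q j θ ^ (1 - a) ∂μ) ^ (1 / a) := fun i j => by
    rw [← Real.rpow_mul (hpos i j).le]
    field_simp
  simp only [hrpow]
  have hbound := integral_mixture_rpow_mul_rpow_le_rpow_one_sub μ ha (fun i => (hζ i).1)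
    (fun h => by simp [h] at hζsum) (fun j => (hmw j).1) (fun h => by simp [h] at hmwsum)
    hpnn hqpos hfin hpos
  set Z := ∑ j, mw j * (∑ i, ζ i * (∫ θ, p i θ ^ a * q j θ ^ (1 - a) ∂μ) ^ (1 / a))
    ^ (-(a / (a - 1)))
  have hZ : 0 ≤ Z := sum_nonneg fun j _ => mul_nonneg (hmw j).1 (Real.rpow_nonneg
    (sum_nonneg fun i _ => mul_nonneg (hζ i).1 (Real.rpow_nonneg (hpos i j).le _)) _)
  have hI : 0 ≤ ∫ θ, (∑ i, ζ i * p i θ) ^ a * (∑ j, mw j * q j θ) ^ (1 - a) ∂μ :=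
    integral_nonneg fun θ => mul_nonneg
      (Real.rpow_nonneg (sum_nonneg fun i _ => mul_nonneg (hζ i).1 (hpnn i θ)) a)
      (Real.rpow_nonneg (sum_nonneg fun j _ => mul_nonneg (hmw j).1 (hqpos j θ).le) (1 - a))
  calc _ ≤ (Z ^ (1 - a)) ^ (1 / (a - 1)) := Real.rpow_le_rpow hI hbound (by positivity)
    _ = 1 / Z := by
      rw [← Real.rpow_mul hZ, show (1 - a) * (1 / (a - 1)) = -1 by field_simp; ring,
        Real.rpow_neg_one, one_div]

/-- Two-steps φ-first variational bound on the Rényi divergence between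
mixtures. -/
theorem renyi_mixtures_two_steps_phi_first
    {Θ : Type*} [MeasurableSpace Θ] (μ : Measure Θ)
    (L K : ℕ) (hL : 0 < L) (hK : 0 < K)
    (p : Fin L → Θ → ℝ) (q : Fin K → Θ → ℝ)
    (hpmeas : ∀ i, Measurable (p i)) (hqmeas : ∀ j, Measurable (q j))
    (hpnn : ∀ i θ, 0 ≤ p i θ) (hqpos : ∀ j θ, 0 < q j θ)
    (hpint : ∀ i, ∫ θ, p i θ ∂μ = 1) (hqint : ∀ j, ∫ θ, q j θ ∂μ = 1)
    (ζ : Fin L → ℝ) (hζ : ∀ i, ζ i ∈ Set.Icc (0 : ℝ) 1) (hζsum : ∑ i, ζ i = 1)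
    (mw : Fin K → ℝ) (hmw : ∀ j, mw j ∈ Set.Icc (0 : ℝ) 1)
    (hmwsum : ∑ j, mw j = 1)
    (a : ℝ) (ha : 1 < a)
    (hfin : ∀ i j, Integrable (fun θ => p i θ ^ a * q j θ ^ (1 - a)) μ)
    (hpos : ∀ i j, 0 < ∫ θ, p i θ ^ a * q j θ ^ (1 - a) ∂μ) :
    (∫ θ, (∑ i, ζ i * p i θ) ^ a * (∑ j, mw j * q j θ) ^ (1 - a) ∂μ)
        ^ (1 / (a - 1))
      ≤ 1 / (∑ j, mw j *
          (∑ i, ζ i *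
            ((∫ θ, p i θ ^ a * q j θ ^ (1 - a) ∂μ) ^ (1 / (a - 1)))
              ^ ((a - 1) / a))
            ^ (-(a / (a - 1)))) :=
  renyi_mixtures_two_steps_phi_first_general μ L K p q hpnn hqpos ζ hζ hζsum mw hmw hmwsum a ha hfin
    hpos
end

section
/- Uniform-ψ variational bound on the Rényi divergence between mixtures: for α > 1, d_α( Σ_{i=1}^{L} ζ_i p_i ‖ Σ_{j=1}^{K} μ_j q_j )^{α−1} ≤ L^{α−1} · Σ_{i=1}^{L} ζ_i^{α} · ( Σ_{j=1}^{K} μ_j / d_α(p_i ‖ q_j) )^{1−α}. -/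
/-!
By the power-mean inequality, `(∑ i, ζ i * p i) ^ a ≤ L ^ (a - 1) * ∑ i, (ζ i * p i) ^ a`.
Since `x ↦ x ^ (1 - a)` is convex on `(0, ∞)`, Jensen's inequality applied to `y j / w j` gives
`(∑ j, y j) ^ (1 - a) ≤ ∑ j, w j ^ a * y j ^ (1 - a)` for any probability weights `w`.
Choosing, for each `i`, weights proportional to `mw j / d_α(p_i ‖ q_j)` and integrating
term by term turns the resulting bound into exactly `(∑ j, mw j / d_α(p_i ‖ q_j)) ^ (1 - a)`.
-/

open MeasureTheory Finset Real

theorem convexOn_rpow_of_nonpos {t : ℝ} (ht : t ≤ 0) :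
    ConvexOn ℝ (Set.Ioi 0) fun x : ℝ ↦ x ^ t := by
  refine ⟨convex_Ioi 0, fun x hx y hy α β hα hβ hαβ ↦ ?_⟩
  have hlog : α * log x + β * log y ≤ log (α * x + β * y) :=
    strictConcaveOn_log_Ioi.concaveOn.2 hx hy hα hβ hαβ
  have hxy : 0 < α * x + β * y := (convex_Ioi 0) hx hy hα hβ hαβ
  simp only [smul_eq_mul]
  calc (α * x + β * y) ^ t = exp (log (α * x + β * y) * t) := rpow_def_of_pos hxy t
    _ ≤ exp (α * (log x * t) + β * (log y * t)) := by
      rw [exp_le_exp]; nlinarith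
    _ ≤ α * exp (log x * t) + β * exp (log y * t) := convexOn_exp.2 trivial trivial hα hβ hαβ
    _ = α * x ^ t + β * y ^ t := by rw [rpow_def_of_pos hx, rpow_def_of_pos hy]

theorem rpow_sum_le_sum_rpow_one_sub_mul_rpow {ι : Type*} {s : Finset ι} {w y : ι → ℝ} {t : ℝ}
    (ht : t ≤ 0) (hw : ∀ i ∈ s, 0 < w i) (hw₁ : ∑ i ∈ s, w i = 1) (hy : ∀ i ∈ s, 0 < y i) :
    (∑ i ∈ s, y i) ^ t ≤ ∑ i ∈ s, w i ^ (1 - t) * y i ^ t := by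
  have h := (convexOn_rpow_of_nonpos ht).map_sum_le (t := s) (w := w) (p := fun i ↦ y i / w i)
    (fun i hi ↦ (hw i hi).le) hw₁ (fun i hi ↦ div_pos (hy i hi) (hw i hi))
  have e₁ : ∑ i ∈ s, w i • (y i / w i) = ∑ i ∈ s, y i :=
    sum_congr rfl fun i hi ↦ mul_div_cancel₀ _ (hw i hi).ne'
  have e₂ : ∑ i ∈ s, w i • (y i / w i) ^ t = ∑ i ∈ s, w i ^ (1 - t) * y i ^ t := by
    refine sum_congr rfl fun i hi ↦ ?_
    rw [smul_eq_mul, div_rpow (hy i hi).le (hw i hi).le, rpow_sub (hw i hi), rpow_one]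
    field_simp
  rwa [e₁, e₂] at h

theorem sum_div_rpow_mul_rpow_one_sub {ι : Type*} {s : Finset ι} {u : ι → ℝ} {a : ℝ}
    (hs : s.Nonempty) (hu : ∀ i ∈ s, 0 < u i) :
    ∑ i ∈ s, (u i / ∑ j ∈ s, u j) ^ a * u i ^ (1 - a) = (∑ j ∈ s, u j) ^ (1 - a) := by
  have hS : 0 < ∑ j ∈ s, u j := sum_pos hu hs
  calc ∑ i ∈ s, (u i / ∑ j ∈ s, u j) ^ a * u i ^ (1 - a)
      = (∑ i ∈ s, u i) * (∑ j ∈ s, u j) ^ (-a) := by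
        rw [sum_mul]
        refine sum_congr rfl fun i hi ↦ ?_
        rw [div_rpow (hu i hi).le hS.le, rpow_neg hS.le, rpow_sub (hu i hi), rpow_one]
        field_simp [(rpow_pos_of_pos (hu i hi) a).ne']
    _ = (∑ j ∈ s, u j) ^ (1 - a) := by rw [sub_eq_add_neg, rpow_add hS, rpow_one]

theorem rpow_sum_mul_rpow_sum_le {ι κ : Type*} {s : Finset ι} {t : Finset κ} {x : ι → ℝ}
    {y : κ → ℝ} {w : ι → κ → ℝ} {a : ℝ} (ha : 1 ≤ a) (hx : ∀ i ∈ s, 0 ≤ x i)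
    (hy : ∀ j ∈ t, 0 < y j) (hw : ∀ i ∈ s, ∀ j ∈ t, 0 < w i j)
    (hw₁ : ∀ i ∈ s, ∑ j ∈ t, w i j = 1) :
    (∑ i ∈ s, x i) ^ a * (∑ j ∈ t, y j) ^ (1 - a)
      ≤ (#s : ℝ) ^ (a - 1) * ∑ i ∈ s, ∑ j ∈ t, w i j ^ a * x i ^ a * y j ^ (1 - a) := by
  have hY : 0 ≤ (∑ j ∈ t, y j) ^ (1 - a) :=
    rpow_nonneg (sum_nonneg fun j hj ↦ (hy j hj).le) _
  calc (∑ i ∈ s, x i) ^ a * (∑ j ∈ t, y j) ^ (1 - a)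
      ≤ ((#s : ℝ) ^ (a - 1) * ∑ i ∈ s, x i ^ a) * (∑ j ∈ t, y j) ^ (1 - a) :=
        mul_le_mul_of_nonneg_right (rpow_sum_le_const_mul_sum_rpow_of_nonneg s ha hx) hY
    _ = (#s : ℝ) ^ (a - 1) * ∑ i ∈ s, x i ^ a * (∑ j ∈ t, y j) ^ (1 - a) := by
        rw [mul_assoc, sum_mul]
    _ ≤ (#s : ℝ) ^ (a - 1) * ∑ i ∈ s, x i ^ a * ∑ j ∈ t, w i j ^ a * y j ^ (1 - a) := by
        gcongr with i hi
        · exact rpow_nonneg (hx i hi) a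
        · simpa only [sub_sub_cancel] using
            rpow_sum_le_sum_rpow_one_sub_mul_rpow (t := 1 - a) (by linarith) (hw i hi) (hw₁ i hi) hy
    _ = (#s : ℝ) ^ (a - 1) * ∑ i ∈ s, ∑ j ∈ t, w i j ^ a * x i ^ a * y j ^ (1 - a) := by
        simp only [mul_sum]
        congr! 2 with i - j -
        ring

theorem mixture_rpow_mul_mixture_rpow_le {ι κ : Type*} {s : Finset ι} {t : Finset κ}
    {ζ P : ι → ℝ} {m Q : κ → ℝ} {u : ι → κ → ℝ} {a : ℝ} (ha : 1 ≤ a) (ht : t.Nonempty)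
    (hζ : ∀ i ∈ s, 0 ≤ ζ i) (hP : ∀ i ∈ s, 0 ≤ P i) (hm : ∀ j ∈ t, 0 < m j)
    (hQ : ∀ j ∈ t, 0 < Q j) (hu : ∀ i ∈ s, ∀ j ∈ t, 0 < u i j) :
    (∑ i ∈ s, ζ i * P i) ^ a * (∑ j ∈ t, m j * Q j) ^ (1 - a)
      ≤ ∑ ij ∈ s ×ˢ t, ((#s : ℝ) ^ (a - 1) * ζ ij.1 ^ a * (u ij.1 ij.2 / ∑ k ∈ t, u ij.1 k) ^ a
          * m ij.2 ^ (1 - a)) * (P ij.1 ^ a * Q ij.2 ^ (1 - a)) := by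
  have hU : ∀ i ∈ s, 0 < ∑ k ∈ t, u i k := fun i hi ↦ sum_pos (hu i hi) ht
  refine (rpow_sum_mul_rpow_sum_le ha (fun i hi ↦ mul_nonneg (hζ i hi) (hP i hi))
    (fun j hj ↦ mul_pos (hm j hj) (hQ j hj)) (fun i hi j hj ↦ div_pos (hu i hi j hj) (hU i hi))
    (fun i hi ↦ by rw [← sum_div, div_self (hU i hi).ne'])).trans_eq ?_
  rw [sum_product, mul_sum]
  refine sum_congr rfl fun i hi ↦ ?_
  rw [mul_sum]
  refine sum_congr rfl fun j hj ↦ ?_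
  rw [mul_rpow (hζ i hi) (hP i hi), mul_rpow (hm j hj).le (hQ j hj).le]
  ring

theorem rpow_one_sub_mul_eq_div_rpow_rpow_one_sub {m c a : ℝ} (hm : 0 ≤ m) (hc : 0 ≤ c)
    (ha : a ≠ 1) : m ^ (1 - a) * c = (m / c ^ (1 / (a - 1))) ^ (1 - a) := by
  rw [div_rpow hm (rpow_nonneg hc _), ← rpow_mul hc,
    show 1 / (a - 1) * (1 - a) = -1 by field_simp [sub_ne_zero.2 ha]; ring, rpow_neg_one,
    div_inv_eq_mul]

theorem integral_le_sum_mul_integral {Θ ι : Type*} [MeasurableSpace Θ] {μ : Measure Θ}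
    {s : Finset ι} {f : Θ → ℝ} {g : ι → Θ → ℝ} (c : ι → ℝ) (hf : ∀ θ, 0 ≤ f θ)
    (hg : ∀ i ∈ s, Integrable (g i) μ) (hfg : ∀ θ, f θ ≤ ∑ i ∈ s, c i * g i θ) :
    ∫ θ, f θ ∂μ ≤ ∑ i ∈ s, c i * ∫ θ, g i θ ∂μ := by
  calc ∫ θ, f θ ∂μ ≤ ∫ θ, ∑ i ∈ s, c i * g i θ ∂μ :=
        integral_mono_of_nonneg (.of_forall hf)
          (integrable_finsetSum _ fun i hi ↦ (hg i hi).const_mul _) (.of_forall hfg)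
    _ = ∑ i ∈ s, c i * ∫ θ, g i θ ∂μ := by
        rw [integral_finsetSum _ fun i hi ↦ (hg i hi).const_mul _]
        simp only [integral_const_mul]

theorem renyi_mixtures_uniform_psi_general
    {Θ : Type*} [MeasurableSpace Θ] (μ : Measure Θ)
    (L K : ℕ) (hK : 0 < K)
    (p : Fin L → Θ → ℝ) (q : Fin K → Θ → ℝ)
    (hpnn : ∀ i θ, 0 ≤ p i θ) (hqpos : ∀ j θ, 0 < q j θ)
    (ζ : Fin L → ℝ) (hζ : ∀ i, ζ i ∈ Set.Icc (0 : ℝ) 1)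
    (mw : Fin K → ℝ) (hmw : ∀ j, mw j ∈ Set.Ioc (0 : ℝ) 1)
    (a : ℝ) (ha : 1 < a)
    (hfin : ∀ i j, Integrable (fun θ => p i θ ^ a * q j θ ^ (1 - a)) μ)
    (hpos : ∀ i j, 0 < ∫ θ, p i θ ^ a * q j θ ^ (1 - a) ∂μ) :
    ((∫ θ, (∑ i, ζ i * p i θ) ^ a * (∑ j, mw j * q j θ) ^ (1 - a) ∂μ)
        ^ (1 / (a - 1))) ^ (a - 1)
      ≤ (L : ℝ) ^ (a - 1) * ∑ i, ζ i ^ a *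
          (∑ j, mw j /
            (∫ θ, p i θ ^ a * q j θ ^ (1 - a) ∂μ) ^ (1 / (a - 1)))
            ^ (1 - a) := by
  have : Nonempty (Fin K) := ⟨⟨0, hK⟩⟩
  set u : Fin L → Fin K → ℝ :=
    fun i j ↦ mw j / (∫ θ, p i θ ^ a * q j θ ^ (1 - a) ∂μ) ^ (1 / (a - 1))
  have hu : ∀ i j, 0 < u i j := fun i j ↦ div_pos (hmw j).1 (rpow_pos_of_pos (hpos i j) _)
  have hF : ∀ θ, 0 ≤ (∑ i, ζ i * p i θ) ^ a * (∑ j, mw j * q j θ) ^ (1 - a) := fun θ ↦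
    mul_nonneg (rpow_nonneg (sum_nonneg fun i _ ↦ mul_nonneg (hζ i).1 (hpnn i θ)) _)
      (rpow_nonneg (sum_nonneg fun j _ ↦ mul_nonneg (hmw j).1.le (hqpos j θ).le) _)
  calc _ = ∫ θ, (∑ i, ζ i * p i θ) ^ a * (∑ j, mw j * q j θ) ^ (1 - a) ∂μ := by
        rw [one_div, rpow_inv_rpow (integral_nonneg hF) (by linarith)]
    _ ≤ _ := integral_le_sum_mul_integral _ hF (fun ij _ ↦ hfin ij.1 ij.2) fun θ ↦
        mixture_rpow_mul_mixture_rpow_le ha.le univ_nonempty (fun i _ ↦ (hζ i).1)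
          (fun i _ ↦ hpnn i θ) (fun j _ ↦ (hmw j).1) (fun j _ ↦ hqpos j θ) fun i _ j _ ↦ hu i j
    _ = _ := by
        rw [sum_product, card_univ, Fintype.card_fin, mul_sum]
        refine sum_congr rfl fun i _ ↦ ?_
        rw [← sum_div_rpow_mul_rpow_one_sub univ_nonempty fun j _ ↦ hu i j, mul_sum, mul_sum]
        refine sum_congr rfl fun j _ ↦ ?_
        rw [← rpow_one_sub_mul_eq_div_rpow_rpow_one_sub (hmw j).1.le (hpos i j).le ha.ne']
        ring

/-- Uniform-ψ variational bound on the Rényi divergence between mixtures. -/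
theorem renyi_mixtures_uniform_psi
    {Θ : Type*} [MeasurableSpace Θ] (μ : Measure Θ)
    (L K : ℕ) (hL : 0 < L) (hK : 0 < K)
    (p : Fin L → Θ → ℝ) (q : Fin K → Θ → ℝ)
    (hpmeas : ∀ i, Measurable (p i)) (hqmeas : ∀ j, Measurable (q j))
    (hpnn : ∀ i θ, 0 ≤ p i θ) (hqpos : ∀ j θ, 0 < q j θ)
    (hpint : ∀ i, ∫ θ, p i θ ∂μ = 1) (hqint : ∀ j, ∫ θ, q j θ ∂μ = 1)
    (ζ : Fin L → ℝ) (hζ : ∀ i, ζ i ∈ Set.Icc (0 : ℝ) 1) (hζsum : ∑ i, ζ i = 1)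
    (mw : Fin K → ℝ) (hmw : ∀ j, mw j ∈ Set.Ioc (0 : ℝ) 1)
    (hmwsum : ∑ j, mw j = 1)
    (a : ℝ) (ha : 1 < a)
    (hfin : ∀ i j, Integrable (fun θ => p i θ ^ a * q j θ ^ (1 - a)) μ)
    (hpos : ∀ i j, 0 < ∫ θ, p i θ ^ a * q j θ ^ (1 - a) ∂μ) :
    ((∫ θ, (∑ i, ζ i * p i θ) ^ a * (∑ j, mw j * q j θ) ^ (1 - a) ∂μ)
        ^ (1 / (a - 1))) ^ (a - 1)
      ≤ (L : ℝ) ^ (a - 1) * ∑ i, ζ i ^ a *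
          (∑ j, mw j /
            (∫ θ, p i θ ^ a * q j θ ^ (1 - a) ∂μ) ^ (1 / (a - 1)))
            ^ (1 - a) :=
  renyi_mixtures_uniform_psi_general μ L K hK p q hpnn hqpos ζ hζ mw hmw a ha hfin hpos
end

section
/- Uniform-φ variational bound on the Rényi divergence between mixtures: for α > 1, d_α( Σ_{i=1}^{L} ζ_i p_i ‖ Σ_{j=1}^{K} μ_j q_j )^{α−1} ≤ K^{-α} · Σ_{j=1}^{K} μ_j^{1−α} · ( Σ_{i=1}^{L} ζ_i · d_α(p_i ‖ q_j)^{(α−1)/α} )^{α}. -/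
open MeasureTheory Finset

/-!
Write `P = ∑ ζ_i p_i`. Jensen's inequality gives `(∑_j z_j) ^ (1 - a) ≤ K ^ (-a) ∑_j z_j ^ (1 - a)`
for positive `z_j`, which splits `P ^ a (∑_j μ_j q_j) ^ (1 - a)` into `K` terms
`μ_j ^ (1 - a) P ^ a q_j ^ (1 - a)`. The integral of `P ^ a q_j ^ (1 - a)` is the `a`-th power of
the norm of `P` in `L^a(q_j ^ (1 - a) μ)`, and Minkowski's inequality bounds that norm by
`∑ ζ_i ‖p_i‖`, where `‖p_i‖ = d_a(p_i ‖ q_j) ^ ((a - 1) / a)`.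
-/

theorem Real.rpow_one_sub_sum_le {ι : Type*} (s : Finset ι) {a : ℝ} (ha : 1 < a)
    {z : ι → ℝ} (hz : ∀ j ∈ s, 0 < z j) :
    (∑ j ∈ s, z j) ^ (1 - a) ≤ (#s : ℝ) ^ (-a) * ∑ j ∈ s, z j ^ (1 - a) := by
  rcases s.eq_empty_or_nonempty with rfl | hs
  · simp [Real.zero_rpow (by linarith : 1 - a ≠ 0)]
  set S := ∑ j ∈ s, z j
  have hS : 0 < S := sum_pos hz hs
  have hn : (0 : ℝ) < #s := by exact_mod_cast hs.card_pos
  -- Jensen for `x ↦ x ^ a` at the points `(z j)⁻¹` with weights `z j / S`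
  have jensen := Real.rpow_arith_mean_le_arith_mean_rpow s (fun j ↦ z j / S) (fun j ↦ (z j)⁻¹)
    (fun j hj ↦ (div_pos (hz j hj) hS).le) (by rw [← sum_div, div_self hS.ne'])
    (fun j hj ↦ (inv_pos.2 (hz j hj)).le) ha.le
  have hmean : ∑ j ∈ s, z j / S * (z j)⁻¹ = #s / S := by
    rw [sum_congr rfl fun j hj ↦ by rw [div_mul_eq_mul_div, mul_inv_cancel₀ (hz j hj).ne'],
      sum_const, nsmul_eq_mul, mul_one_div]
  have hpow : ∑ j ∈ s, z j / S * (z j)⁻¹ ^ a = S⁻¹ * ∑ j ∈ s, z j ^ (1 - a) := by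
    rw [mul_sum]
    refine sum_congr rfl fun j hj ↦ ?_
    rw [Real.inv_rpow (hz j hj).le, Real.rpow_sub (hz j hj), Real.rpow_one]
    ring
  rw [hmean, hpow, Real.div_rpow hn.le hS.le] at jensen
  calc S ^ (1 - a) = (#s : ℝ) ^ (-a) * (S * ((#s : ℝ) ^ a / S ^ a)) := by
        rw [Real.rpow_sub hS, Real.rpow_one, Real.rpow_neg hn.le]
        field_simp
    _ ≤ (#s : ℝ) ^ (-a) * (S * (S⁻¹ * ∑ j ∈ s, z j ^ (1 - a))) := by gcongr
    _ = (#s : ℝ) ^ (-a) * ∑ j ∈ s, z j ^ (1 - a) := by rw [mul_inv_cancel_left₀ hS.ne']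

section

variable {Θ : Type*} [MeasurableSpace Θ] {μ : Measure Θ} {w : Θ → ℝ} {a : ℝ}

theorem eLpNorm'_withDensity_ofReal (hw : Measurable w) (ha : 0 < a) {g : Θ → ℝ}
    (hg : Measurable g) (hg0 : ∀ θ, 0 ≤ g θ) :
    eLpNorm' g a (μ.withDensity fun θ ↦ ENNReal.ofReal (w θ))
      = (∫⁻ θ, ENNReal.ofReal (g θ ^ a * w θ) ∂μ) ^ (1 / a) := by
  rw [eLpNorm'_eq_lintegral_enorm,
    lintegral_withDensity_eq_lintegral_mul₀ hw.ennreal_ofReal.aemeasurable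
      (hg.enorm.pow_const a).aemeasurable]
  congr 1
  refine lintegral_congr fun θ ↦ ?_
  rw [Pi.mul_apply, Real.enorm_eq_ofReal (hg0 θ), ENNReal.ofReal_rpow_of_nonneg (hg0 θ) ha.le,
    mul_comm, ← ENNReal.ofReal_mul (Real.rpow_nonneg (hg0 θ) a)]

theorem eLpNorm'_withDensity_ofReal_of_integrable (hw : Measurable w) (hw0 : ∀ θ, 0 ≤ w θ)
    (ha : 0 < a) {g : Θ → ℝ} (hg : Measurable g) (hg0 : ∀ θ, 0 ≤ g θ)
    (hint : Integrable (fun θ ↦ g θ ^ a * w θ) μ) :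
    eLpNorm' g a (μ.withDensity fun θ ↦ ENNReal.ofReal (w θ))
      = ENNReal.ofReal ((∫ θ, g θ ^ a * w θ ∂μ) ^ (1 / a)) := by
  have hnn : ∀ θ, 0 ≤ g θ ^ a * w θ := fun θ ↦ mul_nonneg (Real.rpow_nonneg (hg0 θ) a) (hw0 θ)
  rw [eLpNorm'_withDensity_ofReal hw ha hg hg0,
    ← ofReal_integral_eq_lintegral_ofReal hint (ae_of_all _ hnn),
    ENNReal.ofReal_rpow_of_nonneg (integral_nonneg hnn) (by positivity)]

theorem integrable_and_integral_le_of_lintegral_ofReal_le {f : Θ → ℝ}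
    (hf : AEStronglyMeasurable f μ) (hf0 : 0 ≤ᵐ[μ] f) {r : ℝ} (hr : 0 ≤ r)
    (h : ∫⁻ θ, ENNReal.ofReal (f θ) ∂μ ≤ ENNReal.ofReal r) :
    Integrable f μ ∧ ∫ θ, f θ ∂μ ≤ r := by
  refine ⟨⟨hf, (hasFiniteIntegral_iff_ofReal hf0).2 (h.trans_lt ENNReal.ofReal_lt_top)⟩, ?_⟩
  rw [integral_eq_lintegral_of_nonneg_ae hf0 hf]
  exact ENNReal.toReal_le_of_le_ofReal hr h

theorem integrable_and_integral_sum_rpow_mul_le {ι : Type*} [Fintype ι] (hw : Measurable w)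
    (hw0 : ∀ θ, 0 ≤ w θ) (ha : 1 ≤ a) {p : ι → Θ → ℝ} (hp : ∀ i, Measurable (p i))
    (hp0 : ∀ i θ, 0 ≤ p i θ) {c : ι → ℝ} (hc : ∀ i, 0 ≤ c i)
    (hint : ∀ i, Integrable (fun θ ↦ p i θ ^ a * w θ) μ) :
    Integrable (fun θ ↦ (∑ i, c i * p i θ) ^ a * w θ) μ ∧
      ∫ θ, (∑ i, c i * p i θ) ^ a * w θ ∂μ
        ≤ (∑ i, c i * (∫ θ, p i θ ^ a * w θ ∂μ) ^ (1 / a)) ^ a := by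
  have ha0 : 0 < a := one_pos.trans_le ha
  set ν := μ.withDensity fun θ ↦ ENNReal.ofReal (w θ)
  set P := fun θ ↦ ∑ i, c i * p i θ
  have hP : Measurable P := Finset.measurable_sum _ fun i _ ↦ (hp i).const_mul (c i)
  have hP0 : ∀ θ, 0 ≤ P θ := fun θ ↦ sum_nonneg fun i _ ↦ mul_nonneg (hc i) (hp0 i θ)
  have hterm0 : ∀ i, 0 ≤ c i * (∫ θ, p i θ ^ a * w θ ∂μ) ^ (1 / a) := fun i ↦
    mul_nonneg (hc i) (Real.rpow_nonneg
      (integral_nonneg fun θ ↦ mul_nonneg (Real.rpow_nonneg (hp0 i θ) a) (hw0 θ)) _)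
  have hR0 := sum_nonneg fun i (_ : i ∈ univ) ↦ hterm0 i
  have minkowski : eLpNorm' P a ν
      ≤ ENNReal.ofReal (∑ i, c i * (∫ θ, p i θ ^ a * w θ ∂μ) ^ (1 / a)) := calc
    eLpNorm' P a ν = eLpNorm' (∑ i, c i • p i) a ν := by
      congr 1; ext θ; simp [P]
    _ ≤ ∑ i, eLpNorm' (c i • p i) a ν :=
      eLpNorm'_sum_le (fun i _ ↦ ((hp i).const_smul (c i)).aestronglyMeasurable) ha
    _ = ∑ i, ENNReal.ofReal (c i * (∫ θ, p i θ ^ a * w θ ∂μ) ^ (1 / a)) := by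
      refine sum_congr rfl fun i _ ↦ ?_
      rw [eLpNorm'_const_smul _ ha0, Real.enorm_eq_ofReal (hc i),
        eLpNorm'_withDensity_ofReal_of_integrable hw hw0 ha0 (hp i) (hp0 i) (hint i),
        ENNReal.ofReal_mul (hc i)]
    _ = _ := (ENNReal.ofReal_sum_of_nonneg fun i _ ↦ hterm0 i).symm
  have hlint : ∫⁻ θ, ENNReal.ofReal (P θ ^ a * w θ) ∂μ
      ≤ ENNReal.ofReal ((∑ i, c i * (∫ θ, p i θ ^ a * w θ ∂μ) ^ (1 / a)) ^ a) := by
    rw [← ENNReal.ofReal_rpow_of_nonneg hR0 ha0.le, ← ENNReal.rpow_inv_le_iff ha0, ← one_div,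
      ← eLpNorm'_withDensity_ofReal hw ha0 hP hP0]
    exact minkowski
  exact integrable_and_integral_le_of_lintegral_ofReal_le
    ((hP.pow_const a).mul hw).aestronglyMeasurable
    (ae_of_all _ fun θ ↦ mul_nonneg (Real.rpow_nonneg (hP0 θ) a) (hw0 θ))
    (Real.rpow_nonneg hR0 a) hlint

theorem integral_mul_sum_rpow_one_sub_le {ι : Type*} [Fintype ι] {f : Θ → ℝ}
    (hf0 : ∀ θ, 0 ≤ f θ) (ha : 1 < a) {m : ι → ℝ} (hm : ∀ j, 0 < m j) {q : ι → Θ → ℝ}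
    (hq : ∀ j θ, 0 < q j θ) (hint : ∀ j, Integrable (fun θ ↦ f θ * q j θ ^ (1 - a)) μ) :
    ∫ θ, f θ * (∑ j, m j * q j θ) ^ (1 - a) ∂μ
      ≤ (Fintype.card ι : ℝ) ^ (-a) * ∑ j, m j ^ (1 - a) * ∫ θ, f θ * q j θ ^ (1 - a) ∂μ := by
  have hpointwise : ∀ θ, f θ * (∑ j, m j * q j θ) ^ (1 - a)
      ≤ (Fintype.card ι : ℝ) ^ (-a) * ∑ j, m j ^ (1 - a) * (f θ * q j θ ^ (1 - a)) := fun θ ↦ by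
    have h := Real.rpow_one_sub_sum_le univ ha fun j _ ↦ mul_pos (hm j) (hq j θ)
    rw [card_univ] at h
    calc f θ * (∑ j, m j * q j θ) ^ (1 - a)
        ≤ f θ * ((Fintype.card ι : ℝ) ^ (-a) * ∑ j, (m j * q j θ) ^ (1 - a)) :=
          mul_le_mul_of_nonneg_left h (hf0 θ)
      _ = _ := by
        simp only [Real.mul_rpow (hm _).le (hq _ θ).le, mul_sum]
        exact sum_congr rfl fun j _ ↦ by ring
  calc ∫ θ, f θ * (∑ j, m j * q j θ) ^ (1 - a) ∂μ
      ≤ ∫ θ, (Fintype.card ι : ℝ) ^ (-a) * ∑ j, m j ^ (1 - a) * (f θ * q j θ ^ (1 - a)) ∂μ :=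
        integral_mono_of_nonneg
          (ae_of_all _ fun θ ↦ mul_nonneg (hf0 θ)
            (Real.rpow_nonneg (sum_nonneg fun j _ ↦ mul_nonneg (hm j).le (hq j θ).le) _))
          ((integrable_finsetSum _ fun j _ ↦ (hint j).const_mul _).const_mul _)
          (ae_of_all _ hpointwise)
    _ = _ := by
        rw [integral_const_mul, integral_finsetSum _ fun j _ ↦ (hint j).const_mul _]
        simp only [integral_const_mul]

end

theorem renyi_mixtures_uniform_phi_general
    {Θ : Type*} [MeasurableSpace Θ] (μ : Measure Θ)
    (L K : ℕ)
    (p : Fin L → Θ → ℝ) (q : Fin K → Θ → ℝ)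
    (hpmeas : ∀ i, Measurable (p i)) (hqmeas : ∀ j, Measurable (q j))
    (hpnn : ∀ i θ, 0 ≤ p i θ) (hqpos : ∀ j θ, 0 < q j θ)
    (ζ : Fin L → ℝ) (hζ : ∀ i, ζ i ∈ Set.Icc (0 : ℝ) 1)
    (mw : Fin K → ℝ) (hmw : ∀ j, mw j ∈ Set.Ioc (0 : ℝ) 1)
    (a : ℝ) (ha : 1 < a)
    (hfin : ∀ i j, Integrable (fun θ => p i θ ^ a * q j θ ^ (1 - a)) μ) :
    ((∫ θ, (∑ i, ζ i * p i θ) ^ a * (∑ j, mw j * q j θ) ^ (1 - a) ∂μ)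
        ^ (1 / (a - 1))) ^ (a - 1)
      ≤ (K : ℝ) ^ (-a) * ∑ j, mw j ^ (1 - a) *
          (∑ i, ζ i *
            ((∫ θ, p i θ ^ a * q j θ ^ (1 - a) ∂μ) ^ (1 / (a - 1)))
              ^ ((a - 1) / a)) ^ a := by
  have ha1 : a - 1 ≠ 0 := (sub_pos.2 ha).ne'
  set P := fun θ ↦ ∑ i, ζ i * p i θ
  have hP0 : ∀ θ, 0 ≤ P θ := fun θ ↦ sum_nonneg fun i _ ↦ mul_nonneg (hζ i).1 (hpnn i θ)
  have hweight0 : ∀ j θ, 0 ≤ q j θ ^ (1 - a) := fun j θ ↦ Real.rpow_nonneg (hqpos j θ).le _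
  have hmink := fun j ↦ integrable_and_integral_sum_rpow_mul_le ((hqmeas j).pow_const (1 - a))
    (hweight0 j) ha.le hpmeas hpnn (fun i ↦ (hζ i).1) fun i ↦ hfin i j
  have hsplit := integral_mul_sum_rpow_one_sub_le (μ := μ) (fun θ ↦ Real.rpow_nonneg (hP0 θ) a)
    ha (fun j ↦ (hmw j).1) hqpos fun j ↦ (hmink j).1
  have hmix0 : 0 ≤ ∫ θ, P θ ^ a * (∑ j, mw j * q j θ) ^ (1 - a) ∂μ :=
    integral_nonneg fun θ ↦ mul_nonneg (Real.rpow_nonneg (hP0 θ) a)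
      (Real.rpow_nonneg (sum_nonneg fun j _ ↦ mul_nonneg (hmw j).1.le (hqpos j θ).le) _)
  have hexp : ∀ i j, ((∫ θ, p i θ ^ a * q j θ ^ (1 - a) ∂μ) ^ (1 / (a - 1))) ^ ((a - 1) / a)
      = (∫ θ, p i θ ^ a * q j θ ^ (1 - a) ∂μ) ^ (1 / a) := fun i j ↦ by
    rw [← Real.rpow_mul (integral_nonneg fun θ ↦
      mul_nonneg (Real.rpow_nonneg (hpnn i θ) a) (hweight0 j θ))]
    field_simp
  rw [← Real.rpow_mul hmix0, one_div_mul_cancel ha1, Real.rpow_one]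
  simp only [hexp]
  rw [Fintype.card_fin] at hsplit
  refine hsplit.trans ?_
  gcongr with j
  · exact Real.rpow_nonneg (hmw j).1.le _
  · exact (hmink j).2

/-- Uniform-φ variational bound on the Rényi divergence between mixtures. -/
theorem renyi_mixtures_uniform_phi
    {Θ : Type*} [MeasurableSpace Θ] (μ : Measure Θ)
    (L K : ℕ) (hL : 0 < L) (hK : 0 < K)
    (p : Fin L → Θ → ℝ) (q : Fin K → Θ → ℝ)
    (hpmeas : ∀ i, Measurable (p i)) (hqmeas : ∀ j, Measurable (q j))
    (hpnn : ∀ i θ, 0 ≤ p i θ) (hqpos : ∀ j θ, 0 < q j θ)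
    (hpint : ∀ i, ∫ θ, p i θ ∂μ = 1) (hqint : ∀ j, ∫ θ, q j θ ∂μ = 1)
    (ζ : Fin L → ℝ) (hζ : ∀ i, ζ i ∈ Set.Icc (0 : ℝ) 1) (hζsum : ∑ i, ζ i = 1)
    (mw : Fin K → ℝ) (hmw : ∀ j, mw j ∈ Set.Ioc (0 : ℝ) 1)
    (hmwsum : ∑ j, mw j = 1)
    (a : ℝ) (ha : 1 < a)
    (hfin : ∀ i j, Integrable (fun θ => p i θ ^ a * q j θ ^ (1 - a)) μ)
    (hpos : ∀ i j, 0 < ∫ θ, p i θ ^ a * q j θ ^ (1 - a) ∂μ) :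
    ((∫ θ, (∑ i, ζ i * p i θ) ^ a * (∑ j, mw j * q j θ) ^ (1 - a) ∂μ)
        ^ (1 / (a - 1))) ^ (a - 1)
      ≤ (K : ℝ) ^ (-a) * ∑ j, mw j ^ (1 - a) *
          (∑ i, ζ i *
            ((∫ θ, p i θ ^ a * q j θ ^ (1 - a) ∂μ) ^ (1 / (a - 1)))
              ^ ((a - 1) / a)) ^ a :=
  renyi_mixtures_uniform_phi_general μ L K p q hpmeas hqmeas hpnn hqpos ζ hζ mw hmw a ha hfin
end

section
/- Optimal ψ-variational parameters: for fixed strictly positive φ_{ij} with Σ_{j=1}^{K} φ_{ij} = ζ_i for each i, the function F(ψ) = Σ_{i=1}^{L} Σ_{j=1}^{K} φ_{ij}^{α} ψ_{ij}^{1−α} d_{ij}^{α−1}, over all strictly positive (ψ_{ij}) satisfying Σ_{i=1}^{L} ψ_{ij} = μ_j for each j, attains its minimum at ψ*_{ij} = μ_j · φ_{ij} d_{ij}^{(α−1)/α} / ( Σ_{l=1}^{L} φ_{lj} d_{lj}^{(α−1)/α} ); that is, F(ψ*) ≤ F(ψ) for every feasible ψ. -/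
/-!
The objective separates into columns, `∑ⱼ ∑ᵢ cᵢⱼ ^ α ψᵢⱼ ^ (1 - α)` with
`cᵢⱼ = φᵢⱼ dᵢⱼ ^ ((α - 1) / α)`, and the constraint on column `j` only fixes `∑ᵢ ψᵢⱼ = μⱼ`.
On each column Radon's inequality `(∑ cᵢ) ^ α (∑ pᵢ) ^ (1 - α) ≤ ∑ cᵢ ^ α pᵢ ^ (1 - α)` gives a
lower bound that depends only on `μⱼ`, and the proportional choice `ψ*ᵢⱼ ∝ cᵢⱼ` attains it.
-/

open Finset

section Radon

variable {ι : Type*} {s : Finset ι} {a : ℝ} {c p : ι → ℝ}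

/-- Radon's inequality: Jensen's inequality for `t ↦ t ^ a` at the points `c i / p i`
with weights `p i / ∑ p`. -/
theorem rpow_sum_mul_rpow_sum_one_sub_le_sum (ha : 1 ≤ a) (hc : ∀ i ∈ s, 0 ≤ c i)
    (hp : ∀ i ∈ s, 0 < p i) (hP : 0 < ∑ i ∈ s, p i) :
    (∑ i ∈ s, c i) ^ a * (∑ i ∈ s, p i) ^ (1 - a) ≤ ∑ i ∈ s, c i ^ a * p i ^ (1 - a) := by
  set P := ∑ i ∈ s, p i
  have jensen := Real.rpow_arith_mean_le_arith_mean_rpow s (fun i => p i / P)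
    (fun i => c i / p i) (fun i hi => div_nonneg (hp i hi).le hP.le)
    (by rw [← sum_div, div_self hP.ne']) (fun i hi => div_nonneg (hc i hi) (hp i hi).le) ha
  have mean_eq : ∑ i ∈ s, p i / P * (c i / p i) = (∑ i ∈ s, c i) / P := by
    rw [sum_div]
    refine sum_congr rfl fun i hi => ?_
    field_simp [(hp i hi).ne']
  have rpow_mean_eq : ∑ i ∈ s, p i / P * (c i / p i) ^ a
      = (∑ i ∈ s, c i ^ a * p i ^ (1 - a)) / P := by
    rw [sum_div]
    refine sum_congr rfl fun i hi => ?_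
    rw [Real.div_rpow (hc i hi) (hp i hi).le, Real.rpow_sub (hp i hi), Real.rpow_one]
    field_simp [(hp i hi).ne']
  rw [mean_eq, rpow_mean_eq, Real.div_rpow (sum_nonneg hc) hP.le, le_div_iff₀ hP] at jensen
  calc (∑ i ∈ s, c i) ^ a * P ^ (1 - a) = (∑ i ∈ s, c i) ^ a / P ^ a * P := by
        rw [Real.rpow_sub hP, Real.rpow_one]; ring
    _ ≤ ∑ i ∈ s, c i ^ a * p i ^ (1 - a) := jensen

theorem sum_rpow_mul_proportional_rpow_one_sub (hs : s.Nonempty) (hc : ∀ i ∈ s, 0 < c i)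
    {μ : ℝ} (hμ : 0 ≤ μ) :
    ∑ i ∈ s, c i ^ a * (μ * (c i / ∑ l ∈ s, c l)) ^ (1 - a)
      = (∑ i ∈ s, c i) ^ a * μ ^ (1 - a) := by
  set S := ∑ i ∈ s, c i
  have hS : 0 < S := sum_pos hc hs
  have term_eq : ∀ i ∈ s,
      c i ^ a * (μ * (c i / S)) ^ (1 - a) = μ ^ (1 - a) * S ^ (a - 1) * c i := by
    intro i hi
    rw [Real.mul_rpow hμ (div_nonneg (hc i hi).le hS.le), Real.div_rpow (hc i hi).le hS.le,
      Real.rpow_sub hS, Real.rpow_sub hS, Real.rpow_sub (hc i hi), Real.rpow_one, Real.rpow_one]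
    field_simp [(Real.rpow_pos_of_pos (hc i hi) a).ne']
  rw [sum_congr rfl term_eq, ← mul_sum, mul_assoc, ← Real.rpow_add_one hS.ne', sub_add_cancel,
    mul_comm]

end Radon

theorem optimal_psi_variational_general
    (a : ℝ) (ha : 1 < a)
    (L K : ℕ)
    (d : Fin L → Fin K → ℝ) (hd : ∀ i j, 0 < d i j)
    (mw : Fin K → ℝ) (hmw : ∀ j, 0 < mw j)
    (φ : Fin L → Fin K → ℝ) (hφ : ∀ i j, 0 < φ i j)
    (ψ : Fin L → Fin K → ℝ) (hψ : ∀ i j, 0 < ψ i j)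
    (hψsum : ∀ j, ∑ i, ψ i j = mw j) :
    (∑ i, ∑ j, φ i j ^ a *
        (mw j * (φ i j * d i j ^ ((a - 1) / a)
          / ∑ l, φ l j * d l j ^ ((a - 1) / a))) ^ (1 - a) * d i j ^ (a - 1))
      ≤ ∑ i, ∑ j, φ i j ^ a * ψ i j ^ (1 - a) * d i j ^ (a - 1) := by
  set c : Fin L → Fin K → ℝ := fun i j => φ i j * d i j ^ ((a - 1) / a)
  have hc : ∀ i j, 0 < c i j := fun i j => mul_pos (hφ i j) (Real.rpow_pos_of_pos (hd i j) _)
  have objective_eq : ∀ x : Fin L → Fin K → ℝ,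
      ∑ i, ∑ j, φ i j ^ a * x i j ^ (1 - a) * d i j ^ (a - 1)
        = ∑ j, ∑ i, c i j ^ a * x i j ^ (1 - a) := by
    intro x
    rw [sum_comm]
    refine sum_congr rfl fun j _ => sum_congr rfl fun i _ => ?_
    rw [Real.mul_rpow (hφ i j).le (Real.rpow_nonneg (hd i j).le _), ← Real.rpow_mul (hd i j).le,
      div_mul_cancel₀ _ (by positivity)]
    ring
  rw [objective_eq (fun i j => mw j * (c i j / ∑ l, c l j)), objective_eq ψ]
  refine sum_le_sum fun j _ => ?_
  have hΨ : 0 < ∑ i, ψ i j := hψsum j ▸ hmw j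
  rw [sum_rpow_mul_proportional_rpow_one_sub (nonempty_of_sum_ne_zero hΨ.ne')
    (fun i _ => hc i j) (hmw j).le, ← hψsum j]
  exact rpow_sum_mul_rpow_sum_one_sub_le_sum ha.le (fun i _ => (hc i j).le) (fun i _ => hψ i j) hΨ

/-- Optimal ψ-variational parameters: for fixed strictly positive φ with
row sums ζ, the variational objective is minimized over feasible ψ (strictly
positive, column sums μ) at the closed-form ψ*. -/
theorem optimal_psi_variational
    (a : ℝ) (ha : 1 < a)
    (L K : ℕ) (hL : 0 < L) (hK : 0 < K)
    (d : Fin L → Fin K → ℝ) (hd : ∀ i j, 0 < d i j)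
    (ζ : Fin L → ℝ) (hζ : ∀ i, 0 < ζ i) (hζsum : ∑ i, ζ i = 1)
    (mw : Fin K → ℝ) (hmw : ∀ j, 0 < mw j) (hmwsum : ∑ j, mw j = 1)
    (φ : Fin L → Fin K → ℝ) (hφ : ∀ i j, 0 < φ i j)
    (hφsum : ∀ i, ∑ j, φ i j = ζ i)
    (ψ : Fin L → Fin K → ℝ) (hψ : ∀ i j, 0 < ψ i j)
    (hψsum : ∀ j, ∑ i, ψ i j = mw j) :
    (∑ i, ∑ j, φ i j ^ a *
        (mw j * (φ i j * d i j ^ ((a - 1) / a)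
          / ∑ l, φ l j * d l j ^ ((a - 1) / a))) ^ (1 - a) * d i j ^ (a - 1))
      ≤ ∑ i, ∑ j, φ i j ^ a * ψ i j ^ (1 - a) * d i j ^ (a - 1) :=
  optimal_psi_variational_general a ha L K d hd mw hmw φ hφ ψ hψ hψsum
end

section
/- Optimal φ-variational parameters: for fixed strictly positive ψ_{ij} with Σ_{i=1}^{L} ψ_{ij} = μ_j for each j, the function G(φ) = Σ_{i=1}^{L} Σ_{j=1}^{K} φ_{ij}^{α} ψ_{ij}^{1−α} d_{ij}^{α−1}, over all nonnegative (φ_{ij}) satisfying Σ_{j=1}^{K} φ_{ij} = ζ_i for each i, attains its minimum at φ*_{ij} = ζ_i · (ψ_{ij}/d_{ij}) / ( Σ_{k=1}^{K} ψ_{ik}/d_{ik} ); that is, G(φ*) ≤ G(φ) for every feasible φ. -/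
/-!
Minimizing `∑ i, ∑ j, φ i j ^ α * ψ i j ^ (1 - α) * d i j ^ (α - 1)` over feasible `φ` decouples into
independent rows. Writing `w j = ψ i j / d i j`, the cost of a row is `∑ j, w j * (φ i j / w j) ^ α`,
so Jensen's inequality for the convex function `x ↦ x ^ α`, with weights `w j / ∑ k, w k`, bounds it
below by `ζ i ^ α * (∑ k, w k) ^ (1 - α)`. Proportional allocation `φ i j ∝ w j` makes all the
ratios `φ i j / w j` equal, so it attains this bound.
-/

open Finset

namespace Real

variable {ι : Type*} {s : Finset ι} {a : ℝ}

lemma mul_rpow_mul_rpow_one_sub {t w : ℝ} (ht : 0 ≤ t) (hw : 0 ≤ w) :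
    (t * w) ^ a * w ^ (1 - a) = t ^ a * w := by
  rw [mul_rpow ht hw, mul_assoc, ← rpow_add' hw (by norm_num), add_sub_cancel, rpow_one]

lemma sum_mul_rpow_mul_rpow_one_sub {t : ℝ} (ht : 0 ≤ t) {w : ι → ℝ} (hw : ∀ j ∈ s, 0 ≤ w j) :
    ∑ j ∈ s, (t * w j) ^ a * w j ^ (1 - a) = t ^ a * ∑ j ∈ s, w j := by
  rw [mul_sum]
  exact sum_congr rfl fun j hj => mul_rpow_mul_rpow_one_sub ht (hw j hj)

theorem sum_proportional_rpow_mul_rpow_one_sub_le (ha : 1 ≤ a) {w φ : ι → ℝ}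
    (hw : ∀ j ∈ s, 0 < w j) (hφ : ∀ j ∈ s, 0 ≤ φ j) :
    ∑ j ∈ s, ((∑ k ∈ s, φ k) * w j / ∑ k ∈ s, w k) ^ a * w j ^ (1 - a)
      ≤ ∑ j ∈ s, φ j ^ a * w j ^ (1 - a) := by
  rcases s.eq_empty_or_nonempty with rfl | hs
  · simp
  set c := ∑ k ∈ s, φ k
  set W := ∑ k ∈ s, w k
  have hW : 0 < W := sum_pos hw hs
  have hc : 0 ≤ c := sum_nonneg hφ
  have jensen := rpow_arith_mean_le_arith_mean_rpow s (fun j => w j / W) (fun j => φ j / w j)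
    (fun j hj => (div_pos (hw j hj) hW).le) (by rw [← sum_div, div_self hW.ne'])
    (fun j hj => div_nonneg (hφ j hj) (hw j hj).le) ha
  have hmean : ∑ j ∈ s, w j / W * (φ j / w j) = c / W := by
    rw [sum_div]
    exact sum_congr rfl fun j hj => by field_simp [(hw j hj).ne']
  have hmean_rpow : ∑ j ∈ s, w j / W * (φ j / w j) ^ a
      = (∑ j ∈ s, φ j ^ a * w j ^ (1 - a)) / W := by
    rw [sum_div]
    refine sum_congr rfl fun j hj => ?_
    have hwj := hw j hj
    have key := mul_rpow_mul_rpow_one_sub (a := a) (div_nonneg (hφ j hj) hwj.le) hwj.le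
    rw [div_mul_cancel₀ _ hwj.ne'] at key
    rw [key]
    ring
  simp only [hmean, hmean_rpow] at jensen
  calc ∑ j ∈ s, (c * w j / W) ^ a * w j ^ (1 - a)
      = (c / W) ^ a * W := by
        simp only [mul_div_right_comm c]
        exact sum_mul_rpow_mul_rpow_one_sub (div_nonneg hc hW.le) fun j hj => (hw j hj).le
    _ ≤ (∑ j ∈ s, φ j ^ a * w j ^ (1 - a)) / W * W := by gcongr
    _ = ∑ j ∈ s, φ j ^ a * w j ^ (1 - a) := div_mul_cancel₀ _ hW.ne'

end Real

theorem optimal_phi_variational_general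
    (a : ℝ) (ha : 1 < a)
    (L K : ℕ)
    (d : Fin L → Fin K → ℝ) (hd : ∀ i j, 0 < d i j)
    (ζ : Fin L → ℝ)
    (ψ : Fin L → Fin K → ℝ) (hψ : ∀ i j, 0 < ψ i j)
    (φ : Fin L → Fin K → ℝ) (hφ : ∀ i j, 0 ≤ φ i j)
    (hφsum : ∀ i, ∑ j, φ i j = ζ i) :
    (∑ i, ∑ j, (ζ i * (ψ i j / d i j) / ∑ k, ψ i k / d i k) ^ a *
        ψ i j ^ (1 - a) * d i j ^ (a - 1))
      ≤ ∑ i, ∑ j, φ i j ^ a * ψ i j ^ (1 - a) * d i j ^ (a - 1) := by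
  refine sum_le_sum fun i _ => ?_
  have hweight : ∀ j, ψ i j ^ (1 - a) * d i j ^ (a - 1) = (ψ i j / d i j) ^ (1 - a) := fun j => by
    rw [Real.div_rpow (hψ i j).le (hd i j).le, div_eq_mul_inv, ← Real.rpow_neg (hd i j).le,
      neg_sub]
  simp only [mul_assoc, hweight, ← hφsum i]
  exact Real.sum_proportional_rpow_mul_rpow_one_sub_le ha.le
    (fun j _ => div_pos (hψ i j) (hd i j)) fun j _ => hφ i j

/-- Optimal φ-variational parameters: for fixed strictly positive ψ with
column sums μ, the variational objective is minimized over feasible φ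
(nonnegative, row sums ζ) at the closed-form φ*. -/
theorem optimal_phi_variational
    (a : ℝ) (ha : 1 < a)
    (L K : ℕ) (hL : 0 < L) (hK : 0 < K)
    (d : Fin L → Fin K → ℝ) (hd : ∀ i j, 0 < d i j)
    (ζ : Fin L → ℝ) (hζ : ∀ i, 0 < ζ i) (hζsum : ∑ i, ζ i = 1)
    (mw : Fin K → ℝ) (hmw : ∀ j, 0 < mw j) (hmwsum : ∑ j, mw j = 1)
    (ψ : Fin L → Fin K → ℝ) (hψ : ∀ i j, 0 < ψ i j)
    (hψsum : ∀ j, ∑ i, ψ i j = mw j)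
    (φ : Fin L → Fin K → ℝ) (hφ : ∀ i j, 0 ≤ φ i j)
    (hφsum : ∀ i, ∑ j, φ i j = ζ i) :
    (∑ i, ∑ j, (ζ i * (ψ i j / d i j) / ∑ k, ψ i k / d i k) ^ a *
        ψ i j ^ (1 - a) * d i j ^ (a - 1))
      ≤ ∑ i, ∑ j, φ i j ^ a * ψ i j ^ (1 - a) * d i j ^ (a - 1) :=
  optimal_phi_variational_general a ha L K d hd ζ ψ hψ φ hφ hφsum
end
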